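/- arXiv:1512.08122 — 4 statements merged into one kernel-verified Lean document; each statement's English description precedes it below -/
import Mathlib

section
/- Suppose the initial point w⁰ = (x⁰, y⁰, λ⁰) satisfies −Σ_{i=1}^N B_iᵀ λ_i⁰ ∈ ∂g(y⁰), and for every i = 1,…,N and k ≥ 0 the step size satisfies c_i^k ≤ (L_i + γ_i‖A_i‖² + 𝟙{δ_i^k ≠ 0}(1+√k))⁻¹, where ‖A_i‖ is the spectral norm. Let {(x^k, y^k, λ^k)} be generated by SPG-ADMM. Then for every k ≥ 0, every λ = (λ_1,…,λ_N) with λ_i ∈ ℝ^{m_i}, and every (x*, y*, λ*) ∈ χ*: F(x*,y*) − F(x^{k+1},y^{k+1}) + Σ_i ⟨λ_i, b_i − A_i x_i^{k+1} − B_i y^{k+1}⟩ + (1/2) Σ_i [ (1/c_i^k)(‖x_i* − x_i^k‖²_{Q_i^k} − ‖x_i* − x_i^{k+1}‖²_{Q_i^k}) + γ_i(‖B_i(y^k − y*)‖² − ‖B_i(y^{k+1} − y*)‖²) + (1/γ_i)(‖λ_i − λ_i^k‖² − ‖λ_i − λ_i^{k+1}‖²) + 2⟨x_i* − x_i^k,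 δ_i^k⟩ + ‖δ_i^k‖²/(1+√k) ] ≥ (1/2) Σ_i [ ‖x_i^{k+1} − x_i^k‖²_{Q̄_i^k} + γ_i‖B_i(y^{k+1} − y^k)‖² + (1/γ_i)‖λ_i^{k+1} − λ_i^k‖² ], where Q_i^k = I − γ_i c_i^k A_iᵀA_i, Q̄_i^k = (1/c_i^k)Q_i^k − (L_i + 𝟙{δ_i^k ≠ 0}(1+√k)) I, and ‖v‖²_Q = vᵀQv. -/
open Finset Matrix MeasureTheory Filter
open scoped RealInnerProductSpace Classical

/-- Matrix–vector multiplication between Euclidean spaces. -/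
noncomputable def mvec {m n : Type*} [Fintype m] [Fintype n]
    (A : Matrix m n ℝ) (v : EuclideanSpace ℝ n) : EuclideanSpace ℝ m :=
  WithLp.toLp 2 (A.mulVec v)

/-- The `Q`-quadratic form `‖v‖²_Q = vᵀ Q v`. -/
noncomputable def qnorm {d : Type*} [Fintype d] (Q : Matrix d d ℝ)
    (v : EuclideanSpace ℝ d) : ℝ :=
  ⟪v, mvec Q v⟫

/-- Spectral norm of a matrix. -/
noncomputable def spec {m n : Type*} [Fintype m] [Fintype n] [DecidableEq n]
    (A : Matrix m n ℝ) : ℝ :=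
  ‖LinearMap.toContinuousLinearMap (Matrix.toEuclideanLin A)‖

open scoped Topology

/-!
Fix `k` and a block `i`. The proximal-gradient step, together with the descent lemma and the
gradient inequality for the convex `fᵢ`, bounds `(ξᵢ + fᵢ)(xᵢᵏ⁺¹) - (ξᵢ + fᵢ)(xᵢ*)` by
`⟪xᵢᵏ⁺¹ - xᵢᵏ, xᵢ* - xᵢᵏ⁺¹⟫ / cᵢᵏ` plus the error and coupling terms. Since `Aᵢxᵢ* + Bᵢy* = bᵢ`,
the dual update expresses `Aᵢ(xᵢ* - xᵢᵏ⁺¹)` through `Bᵢ(y* - yᵏ⁺¹)` and `λᵢᵏ⁺¹ - λᵢᵏ`, and the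
identity `2⟪b - a, c - b⟫ = ‖c - a‖² - ‖b - a‖² - ‖c - b‖²` turns every cross term into the
telescoping squares; Young's inequality absorbs `⟪δᵢᵏ, xᵢᵏ⁺¹ - xᵢᵏ⟫`.

The `y`-update says `-∑ Bᵢᵀλᵢᵏ⁺¹ ∈ ∂g(yᵏ⁺¹)`, and for `k = 0` the initial condition says the same.
Used at `y*`, this subgradient absorbs `∑ ⟪λᵢᵏ⁺¹, Bᵢ(y* - yᵏ⁺¹)⟫` into `g(y*) - g(yᵏ⁺¹)`;
monotonicity of `∂g` at `yᵏ` and `yᵏ⁺¹` makes `∑ ⟪λᵢᵏ⁺¹ - λᵢᵏ, Bᵢ(yᵏ⁺¹ - yᵏ)⟫` nonpositive.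
-/

section ConvexAnalysis

variable {E : Type*} [NormedAddCommGroup E] [InnerProductSpace ℝ E]

/-- `v ∈ ∂φ(u)` for the extended-valued function equal to `φ` on `s` and to `+∞` off `s`. -/
def HasSubgradientWithinAt (φ : E → ℝ) (v : E) (s : Set E) (u : E) : Prop :=
  ∀ z ∈ s, φ u + ⟪v, z - u⟫ ≤ φ z

theorem HasSubgradientWithinAt.inner_sub_nonneg {φ : E → ℝ} {s : Set E} {u₁ u₂ v₁ v₂ : E}
    (h₁ : HasSubgradientWithinAt φ v₁ s u₁) (h₂ : HasSubgradientWithinAt φ v₂ s u₂)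
    (hu₁ : u₁ ∈ s) (hu₂ : u₂ ∈ s) : 0 ≤ ⟪v₁ - v₂, u₁ - u₂⟫ := by
  have h₁₂ := h₁ u₂ hu₂
  have h₂₁ := h₂ u₁ hu₁
  rw [← neg_sub, inner_neg_right] at h₂₁
  rw [inner_sub_left, ← neg_sub u₂ u₁, inner_neg_right, inner_neg_right]
  linarith

theorem norm_add_smul_sq_real (a b : E) (t : ℝ) :
    ‖a + t • b‖ ^ 2 = ‖a‖ ^ 2 + 2 * t * ⟪a, b⟫ + t ^ 2 * ‖b‖ ^ 2 := by
  rw [norm_add_sq_real, real_inner_smul_right, norm_smul, mul_pow, Real.norm_eq_abs, sq_abs]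
  ring

/-- Compare `u` with the points `u + t • (z - u)` of the segment and let `t → 0⁺`. -/
theorem ConvexOn.le_add_of_isMinOn_add {s : Set E} {φ ψ : E → ℝ} {u z : E} {G H : ℝ}
    (hφ : ConvexOn ℝ s φ) (hmin : IsMinOn (fun v => φ v + ψ v) s u) (hu : u ∈ s) (hz : z ∈ s)
    (hψ : ∀ t : ℝ, 0 < t → t ≤ 1 → ψ (u + t • (z - u)) ≤ ψ u + t * G + t ^ 2 * H) :
    φ u ≤ φ z + G := by
  have hsmall : ∀ t : ℝ, 0 < t → t ≤ 1 → φ u ≤ φ z + G + t * H := by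
    intro t ht ht1
    have hseg : u + t • (z - u) = (1 - t) • u + t • z := by module
    have hconv := hφ.2 hu hz (sub_nonneg.2 ht1) ht.le (sub_add_cancel 1 t)
    have hmem := hφ.1 hu hz (sub_nonneg.2 ht1) ht.le (sub_add_cancel 1 t)
    have hopt := isMinOn_iff.1 hmin _ (hseg ▸ hmem)
    rw [← hseg, smul_eq_mul, smul_eq_mul] at hconv
    have hexp := hψ t ht ht1
    nlinarith
  have hlim : Tendsto (fun t : ℝ => φ z + G + t * H) (𝓝[>] 0) (𝓝 (φ z + G)) := by
    have : Continuous fun t : ℝ => φ z + G + t * H := by fun_prop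
    simpa using (this.tendsto 0).mono_left nhdsWithin_le_nhds
  refine ge_of_tendsto hlim ?_
  filter_upwards [Ioc_mem_nhdsGT zero_lt_one] with t ht using hsmall t ht.1 ht.2

theorem ConvexOn.hasSubgradientWithinAt_of_isMinOn_add_norm_sq {s : Set E} {φ : E → ℝ}
    {c : ℝ} {p u : E} (hφ : ConvexOn ℝ s φ)
    (hmin : IsMinOn (fun v => φ v + (2 * c)⁻¹ * ‖v - p‖ ^ 2) s u) (hu : u ∈ s) :
    HasSubgradientWithinAt φ (c⁻¹ • (p - u)) s u := by
  intro z hz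
  have hopt := hφ.le_add_of_isMinOn_add hmin hu hz (G := c⁻¹ * ⟪u - p, z - u⟫)
    (H := (2 * c)⁻¹ * ‖z - u‖ ^ 2) fun t _ _ => by
      rw [show u + t • (z - u) - p = (u - p) + t • (z - u) by abel, norm_add_smul_sq_real]
      exact le_of_eq (by ring)
  rw [real_inner_smul_left, ← neg_sub u p, inner_neg_left]
  linarith

end ConvexAnalysis

section Smooth

variable {E : Type*} [NormedAddCommGroup E] [InnerProductSpace ℝ E] [CompleteSpace E]
  {f : E → ℝ} {f' : E → E}

theorem hasDerivAt_comp_add_smul (hf : ∀ z, HasGradientAt f (f' z) z) (z v : E) (t : ℝ) :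
    HasDerivAt (fun t : ℝ => f (z + t • v)) ⟪f' (z + t • v), v⟫ t := by
  have hline : HasDerivAt (fun t : ℝ => z + t • v) v t := by
    simpa using ((hasDerivAt_id t).smul_const v).const_add z
  simpa [InnerProductSpace.toDual_apply_apply, Function.comp_def] using
    (hf (z + t • v)).hasFDerivAt.comp_hasDerivAt t hline

theorem ConvexOn.add_inner_gradient_le (hconv : ConvexOn ℝ Set.univ f)
    (hf : ∀ z, HasGradientAt f (f' z) z) (w z : E) :
    f w + ⟪f' w, z - w⟫ ≤ f z := by
  have hline : ConvexOn ℝ Set.univ fun t : ℝ => f (w + t • (z - w)) := by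
    simpa [Function.comp_def, AffineMap.lineMap_apply_module', add_comm] using
      hconv.comp_affineMap (AffineMap.lineMap w z)
  have hslope := hline.le_slope_of_hasDerivAt (Set.mem_univ 0) (Set.mem_univ 1) zero_lt_one
    (by simpa using hasDerivAt_comp_add_smul hf w (z - w) 0)
  simp only [slope_def_field, one_smul, zero_smul, add_zero, sub_zero, div_one,
    add_sub_cancel] at hslope
  linarith

theorem le_add_inner_add_of_lipschitz_gradient {L : ℝ} (hf : ∀ z, HasGradientAt f (f' z) z)
    (hL : ∀ z w, ‖f' z - f' w‖ ≤ L * ‖z - w‖) (z w : E) :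
    f w ≤ f z + ⟪f' z, w - z⟫ + L / 2 * ‖w - z‖ ^ 2 := by
  set v := w - z
  have hφ (t : ℝ) : HasDerivAt (fun t : ℝ => f (z + t • v) - t * ⟪f' z, v⟫)
      (⟪f' (z + t • v), v⟫ - ⟪f' z, v⟫) t := by
    have hlin : HasDerivAt (fun t : ℝ => t * ⟪f' z, v⟫) ⟪f' z, v⟫ t := by
      simpa using (hasDerivAt_id t).mul_const ⟪f' z, v⟫
    exact (hasDerivAt_comp_add_smul hf z v t).sub hlin
  have hB (t : ℝ) :
      HasDerivAt (fun t : ℝ => f z + L / 2 * t ^ 2 * ‖v‖ ^ 2) (L * t * ‖v‖ ^ 2) t := by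
    have := ((hasDerivAt_pow 2 t).const_mul (L / 2)).mul_const (‖v‖ ^ 2) |>.const_add (f z)
    rwa [show L / 2 * ((2 : ℕ) * t ^ (2 - 1)) * ‖v‖ ^ 2 = L * t * ‖v‖ ^ 2 by push_cast; ring]
      at this
  have hbound : ∀ t ∈ Set.Ico (0 : ℝ) 1, ⟪f' (z + t • v), v⟫ - ⟪f' z, v⟫ ≤ L * t * ‖v‖ ^ 2 := by
    rintro t ⟨ht, -⟩
    calc ⟪f' (z + t • v), v⟫ - ⟪f' z, v⟫ = ⟪f' (z + t • v) - f' z, v⟫ := (inner_sub_left ..).symm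
      _ ≤ ‖f' (z + t • v) - f' z‖ * ‖v‖ := real_inner_le_norm _ _
      _ ≤ L * ‖z + t • v - z‖ * ‖v‖ := by gcongr; exact hL _ _
      _ = L * t * ‖v‖ ^ 2 := by
        rw [add_sub_cancel_left, norm_smul, Real.norm_eq_abs, abs_of_nonneg ht]; ring
  have hfence := image_le_of_deriv_right_le_deriv_boundary
    (fun t _ => (hφ t).continuousAt.continuousWithinAt)
    (fun t _ => (hφ t).hasDerivWithinAt) (by simp)
    (fun t _ => (hB t).continuousAt.continuousWithinAt) (fun t _ => (hB t).hasDerivWithinAt)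
    hbound (Set.right_mem_Icc.2 zero_le_one)
  simp only [one_smul, one_mul, one_pow, v, add_sub_cancel] at hfence
  linarith

theorem ConvexOn.add_le_of_isMinOn_proxGradient {s : Set E} {ξ : E → ℝ} {L c : ℝ} {x e u z : E}
    (hξ : ConvexOn ℝ s ξ) (hf : ConvexOn ℝ Set.univ f) (hgrad : ∀ z, HasGradientAt f (f' z) z)
    (hL : ∀ z w, ‖f' z - f' w‖ ≤ L * ‖z - w‖) (hc : c ≠ 0)
    (hmin : IsMinOn (fun v => ξ v + (2 * c)⁻¹ * ‖v - (x - c • (f' x + e))‖ ^ 2) s u)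
    (hu : u ∈ s) (hz : z ∈ s) :
    ξ u + f u ≤ ξ z + f z + c⁻¹ * ⟪u - x, z - u⟫ + ⟪e, z - u⟫ + L / 2 * ‖u - x‖ ^ 2 := by
  have hprox := hξ.hasSubgradientWithinAt_of_isMinOn_add_norm_sq hmin hu z hz
  have hdir : c⁻¹ • (x - c • (f' x + e) - u) = -(c⁻¹ • (u - x)) - f' x - e := by
    rw [show x - c • (f' x + e) - u = -(u - x) - c • (f' x + e) by abel, smul_sub, smul_neg,
      smul_smul, inv_mul_cancel₀ hc, one_smul, sub_add_eq_sub_sub]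
  rw [hdir, inner_sub_left, inner_sub_left, inner_neg_left, real_inner_smul_left] at hprox
  have hdescent := le_add_inner_add_of_lipschitz_gradient hgrad hL x u
  have hsupport := hf.add_inner_gradient_le hgrad x z
  have hsplit : ⟪f' x, z - x⟫ = ⟪f' x, z - u⟫ + ⟪f' x, u - x⟫ := by
    rw [← inner_add_right, sub_add_sub_cancel]
  linarith

end Smooth

section Block

variable {E F H : Type*} [NormedAddCommGroup E] [InnerProductSpace ℝ E]
  [NormedAddCommGroup F] [InnerProductSpace ℝ F] [NormedAddCommGroup H] [InnerProductSpace ℝ H]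

theorem two_mul_inner_sub_sub (a b c : E) :
    2 * ⟪b - a, c - b⟫ = ‖c - a‖ ^ 2 - ‖b - a‖ ^ 2 - ‖c - b‖ ^ 2 := by
  rw [show c - a = (b - a) + (c - b) by abel, norm_add_sq_real]
  ring

theorem neg_young_le_inner [DecidableEq E] (δ e : E) {s : ℝ} (hs : 0 < s) :
    -((if δ = 0 then 0 else s) * ‖e‖ ^ 2 + ‖δ‖ ^ 2 / s) / 2 ≤ ⟪δ, e⟫ := by
  by_cases hδ : δ = 0
  · simp [hδ]
  · rw [if_neg hδ]
    have hcs := neg_le_of_abs_le (abs_real_inner_le_norm δ e)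
    have hamgm : 2 * (s * ‖e‖) * ‖δ‖ ≤ (s * ‖e‖) ^ 2 + ‖δ‖ ^ 2 := two_mul_le_add_sq _ _
    have hyoung : ‖δ‖ * ‖e‖ ≤ (s * ‖e‖ ^ 2 + ‖δ‖ ^ 2 / s) / 2 := by
      rw [le_div_iff₀ two_pos, ← mul_le_mul_iff_of_pos_left hs]
      field_simp
      nlinarith
    linarith

theorem admm_block_le (A : E →ₗ[ℝ] H) (B : F →ₗ[ℝ] H) {b : H} {c γ L σ s Φ Φs : ℝ}
    {x x' xs δ : E} {y y' ys : F} {μ μ' l : H} (hγ : γ ≠ 0)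
    (hfeas : A xs + B ys = b) (hμ : μ' = μ + γ • (A x' + B y' - b))
    (hδ : -(σ * ‖x' - x‖ ^ 2 + ‖δ‖ ^ 2 / s) / 2 ≤ ⟪δ, x' - x⟫)
    (hx : Φ ≤ Φs + c⁻¹ * ⟪x' - x, xs - x'⟫ + ⟪δ, xs - x'⟫
      + ⟪μ + γ • (A x + B y - b), A (xs - x')⟫ + L / 2 * ‖x' - x‖ ^ 2) :
    (1 / 2) * (c⁻¹ * ‖x' - x‖ ^ 2 - γ * ‖A (x' - x)‖ ^ 2 - (L + σ) * ‖x' - x‖ ^ 2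
        + γ * ‖B (y' - y)‖ ^ 2 + γ⁻¹ * ‖μ' - μ‖ ^ 2)
      ≤ Φs - Φ - ⟪μ', B (ys - y')⟫ + ⟪l, b - A x' - B y'⟫
        + (1 / 2) * (c⁻¹ * ‖xs - x‖ ^ 2 - γ * ‖A (xs - x)‖ ^ 2
          - (c⁻¹ * ‖xs - x'‖ ^ 2 - γ * ‖A (xs - x')‖ ^ 2)
          + γ * ‖B (y - ys)‖ ^ 2 - γ * ‖B (y' - ys)‖ ^ 2
          + γ⁻¹ * ‖l - μ‖ ^ 2 - γ⁻¹ * ‖l - μ'‖ ^ 2 + 2 * ⟪xs - x, δ⟫ + ‖δ‖ ^ 2 / s)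
        + ⟪μ' - μ, B (y' - y)⟫ := by
  have hres : A x' + B y' - b = γ⁻¹ • (μ' - μ) := by
    rw [hμ, add_sub_cancel_left, smul_smul, inv_mul_cancel₀ hγ, one_smul]
  have hAxs : A (xs - x') = -B (ys - y') - γ⁻¹ • (μ' - μ) := by
    rw [← hres, ← hfeas]; simp only [map_sub]; abel
  have hw : μ + γ • (A x + B y - b) = μ' - γ • A (x' - x) - γ • B (y' - y) := by
    rw [hμ, map_sub, map_sub]; module
  have hl : b - A x' - B y' = -(γ⁻¹ • (μ' - μ)) := by rw [← hres]; abel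
  have hcoupling : ⟪μ + γ • (A x + B y - b), A (xs - x')⟫
      = -⟪μ', B (ys - y')⟫ - γ⁻¹ * ⟪μ', μ' - μ⟫ - γ * ⟪A (x' - x), A (xs - x')⟫
        + γ * ⟪B (y' - y), B (ys - y')⟫ + ⟪μ' - μ, B (y' - y)⟫ := by
    rw [hw, hAxs]
    simp only [inner_sub_left, inner_sub_right, inner_neg_right, real_inner_smul_left,
      real_inner_smul_right, real_inner_comm (μ' - μ)]
    field_simp
    ring
  have hx3 := two_mul_inner_sub_sub x x' xs
  have hA3 := two_mul_inner_sub_sub (A x) (A x') (A xs)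
  have hB3 := two_mul_inner_sub_sub (B y) (B y') (B ys)
  have hμ3 := two_mul_inner_sub_sub l μ' μ
  rw [norm_sub_rev (B ys) (B y), norm_sub_rev (B ys) (B y')] at hB3
  rw [← neg_sub μ' μ, inner_neg_right, norm_neg, norm_sub_rev μ l, norm_sub_rev μ' l] at hμ3
  simp only [← map_sub] at hA3 hB3
  rw [hl, inner_neg_right, real_inner_smul_right]
  have hδsplit : ⟪δ, xs - x'⟫ = ⟪xs - x, δ⟫ - ⟪δ, x' - x⟫ := by
    rw [real_inner_comm δ (xs - x), ← inner_sub_right, sub_sub_sub_cancel_right]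
  have hμsplit : ⟪μ' - l, μ' - μ⟫ = ⟪μ', μ' - μ⟫ - ⟪l, μ' - μ⟫ := inner_sub_left _ _ _
  linear_combination hx + hδ + hcoupling + c⁻¹ / 2 * hx3 - γ / 2 * hA3 + γ / 2 * hB3
    + γ⁻¹ / 2 * hμ3 + hδsplit + γ⁻¹ * hμsplit

end Block

section Matrix

variable {m n : Type*} [Fintype m] [Fintype n]

theorem mvec_eq_toLpLin [DecidableEq n] (A : Matrix m n ℝ) (v : EuclideanSpace ℝ n) :
    mvec A v = toLpLin 2 2 A v := rfl

theorem inner_mvec_transpose_left (A : Matrix m n ℝ) (u : EuclideanSpace ℝ m)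
    (v : EuclideanSpace ℝ n) : ⟪mvec Aᵀ u, v⟫ = ⟪u, mvec A v⟫ := by
  change ⟪toEuclideanLin Aᵀ u, v⟫ = ⟪u, toEuclideanLin A v⟫
  rw [← conjTranspose_eq_transpose_of_trivial, toEuclideanLin_conjTranspose_eq_adjoint,
    LinearMap.adjoint_inner_left]

theorem qnorm_one_sub_smul_transpose_mul [DecidableEq n] (A : Matrix m n ℝ) (r : ℝ)
    (w : EuclideanSpace ℝ n) : qnorm (1 - r • (Aᵀ * A)) w = ‖w‖ ^ 2 - r * ‖mvec A w‖ ^ 2 := by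
  rw [qnorm, mvec_eq_toLpLin, map_sub, map_smul, toLpLin_one, toLpLin_mul_same]
  simp only [LinearMap.sub_apply, LinearMap.smul_apply, LinearMap.id_apply, LinearMap.comp_apply,
    inner_sub_right, real_inner_smul_right, ← mvec_eq_toLpLin, real_inner_self_eq_norm_sq]
  rw [real_inner_comm, inner_mvec_transpose_left, real_inner_self_eq_norm_sq]

theorem qnorm_smul_sub_smul_one [DecidableEq n] (Q : Matrix n n ℝ) (a r : ℝ)
    (w : EuclideanSpace ℝ n) : qnorm (a • Q - r • 1) w = a * qnorm Q w - r * ‖w‖ ^ 2 := by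
  rw [qnorm, qnorm, mvec_eq_toLpLin, mvec_eq_toLpLin, map_sub, map_smul, map_smul, toLpLin_one]
  simp only [LinearMap.sub_apply, LinearMap.smul_apply, LinearMap.id_apply, inner_sub_right,
    real_inner_smul_right, real_inner_self_eq_norm_sq]

end Matrix

theorem eq_zero_of_forall_sum_inner_le {ι : Type*} [Fintype ι] {H : ι → Type*}
    [∀ i, NormedAddCommGroup (H i)] [∀ i, InnerProductSpace ℝ (H i)] {r μ : ∀ i, H i}
    (h : ∀ l : ∀ i, H i, ∑ i, ⟪l i, r i⟫ ≤ ∑ i, ⟪μ i, r i⟫) (i : ι) : r i = 0 := by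
  have hsum := h (μ + r)
  simp only [Pi.add_apply, inner_add_left, sum_add_distrib, real_inner_self_eq_norm_sq] at hsum
  have hzero : ∑ j, ‖r j‖ ^ 2 = 0 := le_antisymm (by linarith) (sum_nonneg fun j _ => by positivity)
  simpa using (sum_eq_zero_iff_of_nonneg fun j _ => sq_nonneg ‖r j‖).1 hzero i (mem_univ i)

section Subgradient

variable {ι : Type*} [Fintype ι] {m : ι → Type*} [∀ i, Fintype (m i)] {ny : Type*} [Fintype ny]
  (B : ∀ i, Matrix (m i) ny ℝ)

theorem inner_neg_sum_mvec_transpose (μ : ∀ i, EuclideanSpace ℝ (m i)) (v : EuclideanSpace ℝ ny) :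
    ⟪-∑ i, mvec (B i)ᵀ (μ i), v⟫ = -∑ i, ⟪μ i, mvec (B i) v⟫ := by
  simp only [inner_neg_left, sum_inner, inner_mvec_transpose_left]

theorem sum_inner_sub_mvec_nonpos_of_hasSubgradientWithinAt {s : Set (EuclideanSpace ℝ ny)}
    {g : EuclideanSpace ℝ ny → ℝ} {μ₁ μ₂ : ∀ i, EuclideanSpace ℝ (m i)}
    {u₁ u₂ : EuclideanSpace ℝ ny} (h₁ : HasSubgradientWithinAt g (-∑ i, mvec (B i)ᵀ (μ₁ i)) s u₁)
    (h₂ : HasSubgradientWithinAt g (-∑ i, mvec (B i)ᵀ (μ₂ i)) s u₂) (hu₁ : u₁ ∈ s)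
    (hu₂ : u₂ ∈ s) :
    ∑ i, ⟪μ₁ i - μ₂ i, mvec (B i) (u₁ - u₂)⟫ ≤ 0 := by
  have h := h₁.inner_sub_nonneg h₂ hu₁ hu₂
  rw [inner_sub_left, inner_neg_sum_mvec_transpose B, inner_neg_sum_mvec_transpose B] at h
  simp only [inner_sub_left, sum_sub_distrib]
  linarith

theorem ConvexOn.hasSubgradientWithinAt_of_isMinOn_augmented {s : Set (EuclideanSpace ℝ ny)}
    {g : EuclideanSpace ℝ ny → ℝ} (hg : ConvexOn ℝ s g) (a b μ : ∀ i, EuclideanSpace ℝ (m i))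
    {γ : ι → ℝ} (hγ : ∀ i, γ i ≠ 0) {u : EuclideanSpace ℝ ny} (hu : u ∈ s)
    (hmin : IsMinOn
      (fun z => g z + ∑ i, γ i / 2 * ‖a i + mvec (B i) z - b i + (γ i)⁻¹ • μ i‖ ^ 2) s u) :
    HasSubgradientWithinAt g (-∑ i, mvec (B i)ᵀ (μ i + γ i • (a i + mvec (B i) u - b i))) s u := by
  intro z hz
  have hopt := hg.le_add_of_isMinOn_add hmin hu hz
    (G := ∑ i, ⟪μ i + γ i • (a i + mvec (B i) u - b i), mvec (B i) (z - u)⟫)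
    (H := ∑ i, γ i / 2 * ‖mvec (B i) (z - u)‖ ^ 2) fun t _ _ => le_of_eq <| by
      rw [mul_sum, mul_sum, ← sum_add_distrib, ← sum_add_distrib]
      refine sum_congr rfl fun i _ => ?_
      have hscale : μ i + γ i • (a i + mvec (B i) u - b i)
          = γ i • (a i + mvec (B i) u - b i + (γ i)⁻¹ • μ i) := by
        rw [smul_add, smul_smul, mul_inv_cancel₀ (hγ i), one_smul, add_comm]
      rw [show a i + mvec (B i) (u + t • (z - u)) - b i + (γ i)⁻¹ • μ i
          = (a i + mvec (B i) u - b i + (γ i)⁻¹ • μ i) + t • mvec (B i) (z - u) by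
        simp only [mvec_eq_toLpLin, map_add, map_smul]; abel,
        norm_add_smul_sq_real, hscale, real_inner_smul_left]
      ring
  rw [inner_neg_sum_mvec_transpose B]
  linarith

end Subgradient

section SpgAdmm

variable {n m ny : Type*} [Fintype n] [Fintype m] [Fintype ny]

theorem spgAdmm_block_le [DecidableEq n] (A : Matrix m n ℝ) (B : Matrix m ny ℝ)
    {b : EuclideanSpace ℝ m} {dom : Set (EuclideanSpace ℝ n)} {ξ f : EuclideanSpace ℝ n → ℝ}
    {f' : EuclideanSpace ℝ n → EuclideanSpace ℝ n} {L γ c s : ℝ}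
    {x x' xs δ : EuclideanSpace ℝ n} {y y' ys : EuclideanSpace ℝ ny} {μ μ' : EuclideanSpace ℝ m}
    (l : EuclideanSpace ℝ m) (hξ : ConvexOn ℝ dom ξ) (hf : ConvexOn ℝ Set.univ f)
    (hgrad : ∀ z, HasGradientAt f (f' z) z) (hL : ∀ z w, ‖f' z - f' w‖ ≤ L * ‖z - w‖)
    (hγ : 0 < γ) (hc : 0 < c) (hs : 0 < s)
    (hmin : IsMinOn (fun z => ξ z + (2 * c)⁻¹ *
      ‖z - (x - c • (f' x + δ + mvec Aᵀ (μ + γ • (mvec A x + mvec B y - b))))‖ ^ 2) dom x')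
    (hx' : x' ∈ dom) (hxs : xs ∈ dom) (hfeas : mvec A xs + mvec B ys = b)
    (hμ : μ' = μ + γ • (mvec A x' + mvec B y' - b)) :
    (1 / 2 : ℝ) * (qnorm (c⁻¹ • (1 - (γ * c) • (Aᵀ * A)) - (L + (if δ = 0 then 0 else s)) • 1)
        (x' - x) + γ * ‖mvec B (y' - y)‖ ^ 2 + γ⁻¹ * ‖μ' - μ‖ ^ 2)
      ≤ (ξ xs + f xs) - (ξ x' + f x') - ⟪μ', mvec B (ys - y')⟫ + ⟪l, b - mvec A x' - mvec B y'⟫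
        + (1 / 2 : ℝ) * (c⁻¹ * qnorm (1 - (γ * c) • (Aᵀ * A)) (xs - x)
          - c⁻¹ * qnorm (1 - (γ * c) • (Aᵀ * A)) (xs - x')
          + γ * ‖mvec B (y - ys)‖ ^ 2 - γ * ‖mvec B (y' - ys)‖ ^ 2
          + γ⁻¹ * ‖l - μ‖ ^ 2 - γ⁻¹ * ‖l - μ'‖ ^ 2 + 2 * ⟪xs - x, δ⟫ + ‖δ‖ ^ 2 / s)
        + ⟪μ' - μ, mvec B (y' - y)⟫ := by
  have hQ (w : EuclideanSpace ℝ n) :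
      c⁻¹ * qnorm (1 - (γ * c) • (Aᵀ * A)) w = c⁻¹ * ‖w‖ ^ 2 - γ * ‖mvec A w‖ ^ 2 := by
    rw [qnorm_one_sub_smul_transpose_mul]; field_simp
  rw [qnorm_smul_sub_smul_one, hQ, hQ, hQ]
  have hprox := hξ.add_le_of_isMinOn_proxGradient hf hgrad hL hc.ne'
    (by simpa only [add_assoc] using hmin) hx' hxs
  rw [inner_add_left, inner_mvec_transpose_left, ← add_assoc] at hprox
  exact admm_block_le (toLpLin 2 2 A) (toLpLin 2 2 B) hγ.ne' hfeas hμ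
    (neg_young_le_inner δ (x' - x) hs) hprox

end SpgAdmm

/-- The extended-valued `ξᵢ` and `g` are modelled as real-valued functions on their effective
domains `domξ i` and `domg`. -/
theorem spg_admm_one_step_inequality_general
    {N : ℕ} {n m : Fin N → ℕ} {ny : ℕ}
    (A : ∀ i, Matrix (Fin (m i)) (Fin (n i)) ℝ)
    (B : ∀ i, Matrix (Fin (m i)) (Fin ny) ℝ)
    (b : ∀ i, EuclideanSpace ℝ (Fin (m i)))
    (ξ : ∀ i, EuclideanSpace ℝ (Fin (n i)) → ℝ)
    (domξ : ∀ i, Set (EuclideanSpace ℝ (Fin (n i))))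
    (f : ∀ i, EuclideanSpace ℝ (Fin (n i)) → ℝ)
    (f' : ∀ i, EuclideanSpace ℝ (Fin (n i)) → EuclideanSpace ℝ (Fin (n i)))
    (L : Fin N → ℝ)
    (g : EuclideanSpace ℝ (Fin ny) → ℝ)
    (domg : Set (EuclideanSpace ℝ (Fin ny)))
    (γ : Fin N → ℝ) (c : ℕ → Fin N → ℝ)
    (x : ℕ → ∀ i, EuclideanSpace ℝ (Fin (n i)))
    (y : ℕ → EuclideanSpace ℝ (Fin ny))
    (lam : ℕ → ∀ i, EuclideanSpace ℝ (Fin (m i)))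
    -- gradient-error vectors δ_i^k (noisy oracle errors)
    (δ : ℕ → ∀ i, EuclideanSpace ℝ (Fin (n i)))
    -- ξ_i proper closed convex
    (hξconv : ∀ i, ConvexOn ℝ (domξ i) (ξ i))
    -- f_i convex with L_i-Lipschitz gradient
    (hfconv : ∀ i, ConvexOn ℝ Set.univ (f i))
    (hfgrad : ∀ i z, HasGradientAt (f i) (f' i z) z)
    (hfLip : ∀ i z w, ‖f' i z - f' i w‖ ≤ L i * ‖z - w‖)
    -- g proper closed convex
    (hgconv : ConvexOn ℝ domg g)
    -- parameters: γ_i > 0 and the step-size condition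
    (hγ : ∀ i, 0 < γ i)
    (hcpos : ∀ k i, 0 < c k i)
    -- initial condition: −Σ Bᵢᵀ λᵢ⁰ ∈ ∂g(y⁰)
    (hinit : y 0 ∈ domg ∧ ∀ z ∈ domg,
      g (y 0) + ⟪-(∑ i, mvec (B i)ᵀ (lam 0 i)), z - y 0⟫ ≤ g z)
    -- SPG-ADMM x-update (stochastic proximal gradient step)
    (hxup : ∀ k i, x (k+1) i ∈ domξ i ∧ ∀ z ∈ domξ i,
      ξ i (x (k+1) i) + (2 * c k i)⁻¹ *
        ‖x (k+1) i - (x k i - c k i • (f' i (x k i) + δ k i +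
          mvec (A i)ᵀ (lam k i + γ i • (mvec (A i) (x k i) + mvec (B i) (y k) - b i))))‖ ^ 2
      ≤ ξ i z + (2 * c k i)⁻¹ *
        ‖z - (x k i - c k i • (f' i (x k i) + δ k i +
          mvec (A i)ᵀ (lam k i + γ i • (mvec (A i) (x k i) + mvec (B i) (y k) - b i))))‖ ^ 2)
    -- SPG-ADMM y-update
    (hyup : ∀ k, y (k+1) ∈ domg ∧ ∀ z ∈ domg,
      g (y (k+1)) + ∑ i, γ i / 2 *
        ‖mvec (A i) (x (k+1) i) + mvec (B i) (y (k+1)) - b i + (γ i)⁻¹ • lam k i‖ ^ 2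
      ≤ g z + ∑ i, γ i / 2 *
        ‖mvec (A i) (x (k+1) i) + mvec (B i) z - b i + (γ i)⁻¹ • lam k i‖ ^ 2)
    -- SPG-ADMM dual update
    (hlamup : ∀ k i, lam (k+1) i
      = lam k i + γ i • (mvec (A i) (x (k+1) i) + mvec (B i) (y (k+1)) - b i))
    -- (x*, y*, λ*) ∈ χ*, a saddle point of the Lagrangian
    (xs : ∀ i, EuclideanSpace ℝ (Fin (n i)))
    (ys : EuclideanSpace ℝ (Fin ny))
    (ls : ∀ i, EuclideanSpace ℝ (Fin (m i)))
    (hsad₁ : ∀ i, xs i ∈ domξ i) (hsad₂ : ys ∈ domg)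
    (hsad₄ : ∀ l : ∀ i, EuclideanSpace ℝ (Fin (m i)),
      g ys + ∑ i, (ξ i (xs i) + f i (xs i))
        + ∑ i, ⟪l i, mvec (A i) (xs i) + mvec (B i) ys - b i⟫
      ≤ g ys + ∑ i, (ξ i (xs i) + f i (xs i))
        + ∑ i, ⟪ls i, mvec (A i) (xs i) + mvec (B i) ys - b i⟫) :
    -- conclusion: for every k ≥ 0 and every λ, inequality (8) of Lemma 1 holds
    ∀ (k : ℕ) (l : ∀ i, EuclideanSpace ℝ (Fin (m i))),
      (1/2 : ℝ) * ∑ i,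
        (qnorm ((c k i)⁻¹ • (1 - (γ i * c k i) • ((A i)ᵀ * A i))
            - (L i + (if δ k i = 0 then (0:ℝ) else 1 + Real.sqrt k)) • 1)
            (x (k+1) i - x k i)
          + γ i * ‖mvec (B i) (y (k+1) - y k)‖ ^ 2
          + (γ i)⁻¹ * ‖lam (k+1) i - lam k i‖ ^ 2)
      ≤ (g ys + ∑ i, (ξ i (xs i) + f i (xs i)))
          - (g (y (k+1)) + ∑ i, (ξ i (x (k+1) i) + f i (x (k+1) i)))
        + ∑ i, ⟪l i, b i - mvec (A i) (x (k+1) i) - mvec (B i) (y (k+1))⟫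
        + (1/2 : ℝ) * ∑ i,
          ((c k i)⁻¹ * qnorm (1 - (γ i * c k i) • ((A i)ᵀ * A i)) (xs i - x k i)
            - (c k i)⁻¹ * qnorm (1 - (γ i * c k i) • ((A i)ᵀ * A i)) (xs i - x (k+1) i)
            + γ i * ‖mvec (B i) (y k - ys)‖ ^ 2
            - γ i * ‖mvec (B i) (y (k+1) - ys)‖ ^ 2
            + (γ i)⁻¹ * ‖l i - lam k i‖ ^ 2
            - (γ i)⁻¹ * ‖l i - lam (k+1) i‖ ^ 2
            + 2 * ⟪xs i - x k i, δ k i⟫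
            + ‖δ k i‖ ^ 2 / (1 + Real.sqrt k)) := by
  intro k l
  have hs : (0 : ℝ) < 1 + Real.sqrt k := by positivity
  have hfeas (i) : mvec (A i) (xs i) + mvec (B i) ys = b i :=
    sub_eq_zero.1 <|
      eq_zero_of_forall_sum_inner_le (fun l' => (add_le_add_iff_left _).1 (hsad₄ l')) i
  have hydom : ∀ j, y j ∈ domg
    | 0 => hinit.1
    | j + 1 => (hyup j).1
  have hsub : ∀ j, HasSubgradientWithinAt g (-∑ i, mvec (B i)ᵀ (lam j i)) domg (y j)
    | 0 => hinit.2
    | j + 1 => by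
      simpa only [hlamup] using hgconv.hasSubgradientWithinAt_of_isMinOn_augmented B
        (fun i => mvec (A i) (x (j + 1) i)) b (lam j) (fun i => (hγ i).ne') (hyup j).1 (hyup j).2
  have hmono := sum_inner_sub_mvec_nonpos_of_hasSubgradientWithinAt B (hsub (k + 1)) (hsub k)
    (hydom (k + 1)) (hydom k)
  have hstar := hsub (k + 1) ys hsad₂
  rw [inner_neg_sum_mvec_transpose B] at hstar
  have hblock (i) := spgAdmm_block_le (A i) (B i) (l i) (hξconv i) (hfconv i) (hfgrad i)
    (hfLip i) (hγ i) (hcpos k i) hs (hxup k i).2 (hxup k i).1 (hsad₁ i) (hfeas i) (hlamup k i)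
  rw [mul_sum]
  refine (sum_le_sum fun i _ => hblock i).trans ?_
  simp only [sum_add_distrib, sum_sub_distrib, ← mul_sum]
  linarith

/-- Lemma 1 of the paper: the fundamental one-step inequality for
SPG-ADMM.  Extended-real-valued proper closed convex functions `ξ_i` and `g` are
modelled as real-valued convex functions on their (closed, nonempty, convex) effective
domains `domξ i` and `domg`. -/
theorem spg_admm_one_step_inequality
    {N : ℕ} {n m : Fin N → ℕ} {ny : ℕ}
    (A : ∀ i, Matrix (Fin (m i)) (Fin (n i)) ℝ)
    (B : ∀ i, Matrix (Fin (m i)) (Fin ny) ℝ)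
    (b : ∀ i, EuclideanSpace ℝ (Fin (m i)))
    (ξ : ∀ i, EuclideanSpace ℝ (Fin (n i)) → ℝ)
    (domξ : ∀ i, Set (EuclideanSpace ℝ (Fin (n i))))
    (f : ∀ i, EuclideanSpace ℝ (Fin (n i)) → ℝ)
    (f' : ∀ i, EuclideanSpace ℝ (Fin (n i)) → EuclideanSpace ℝ (Fin (n i)))
    (L : Fin N → ℝ)
    (g : EuclideanSpace ℝ (Fin ny) → ℝ)
    (domg : Set (EuclideanSpace ℝ (Fin ny)))
    (γ : Fin N → ℝ) (c : ℕ → Fin N → ℝ)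
    (x : ℕ → ∀ i, EuclideanSpace ℝ (Fin (n i)))
    (y : ℕ → EuclideanSpace ℝ (Fin ny))
    (lam : ℕ → ∀ i, EuclideanSpace ℝ (Fin (m i)))
    -- gradient-error vectors δ_i^k (noisy oracle errors)
    (δ : ℕ → ∀ i, EuclideanSpace ℝ (Fin (n i)))
    -- ξ_i proper closed convex
    (hξconv : ∀ i, ConvexOn ℝ (domξ i) (ξ i))
    (hξlsc : ∀ i, LowerSemicontinuousOn (ξ i) (domξ i))
    (hξcl : ∀ i, IsClosed (domξ i))
    (hξne : ∀ i, (domξ i).Nonempty)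
    -- f_i convex with L_i-Lipschitz gradient
    (hfconv : ∀ i, ConvexOn ℝ Set.univ (f i))
    (hfgrad : ∀ i z, HasGradientAt (f i) (f' i z) z)
    (hfLip : ∀ i z w, ‖f' i z - f' i w‖ ≤ L i * ‖z - w‖)
    -- g proper closed convex
    (hgconv : ConvexOn ℝ domg g)
    (hglsc : LowerSemicontinuousOn g domg)
    (hgcl : IsClosed domg)
    (hgne : domg.Nonempty)
    -- parameters: γ_i > 0 and the step-size condition
    (hγ : ∀ i, 0 < γ i)
    (hcpos : ∀ k i, 0 < c k i)
    (hcle : ∀ k i, c k i ≤ (L i + γ i * spec (A i) ^ 2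
      + (if δ k i = 0 then (0:ℝ) else 1 + Real.sqrt k))⁻¹)
    -- initial condition: −Σ Bᵢᵀ λᵢ⁰ ∈ ∂g(y⁰)
    (hinit : y 0 ∈ domg ∧ ∀ z ∈ domg,
      g (y 0) + ⟪-(∑ i, mvec (B i)ᵀ (lam 0 i)), z - y 0⟫ ≤ g z)
    -- SPG-ADMM x-update (stochastic proximal gradient step)
    (hxup : ∀ k i, x (k+1) i ∈ domξ i ∧ ∀ z ∈ domξ i,
      ξ i (x (k+1) i) + (2 * c k i)⁻¹ *
        ‖x (k+1) i - (x k i - c k i • (f' i (x k i) + δ k i +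
          mvec (A i)ᵀ (lam k i + γ i • (mvec (A i) (x k i) + mvec (B i) (y k) - b i))))‖ ^ 2
      ≤ ξ i z + (2 * c k i)⁻¹ *
        ‖z - (x k i - c k i • (f' i (x k i) + δ k i +
          mvec (A i)ᵀ (lam k i + γ i • (mvec (A i) (x k i) + mvec (B i) (y k) - b i))))‖ ^ 2)
    -- SPG-ADMM y-update
    (hyup : ∀ k, y (k+1) ∈ domg ∧ ∀ z ∈ domg,
      g (y (k+1)) + ∑ i, γ i / 2 *
        ‖mvec (A i) (x (k+1) i) + mvec (B i) (y (k+1)) - b i + (γ i)⁻¹ • lam k i‖ ^ 2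
      ≤ g z + ∑ i, γ i / 2 *
        ‖mvec (A i) (x (k+1) i) + mvec (B i) z - b i + (γ i)⁻¹ • lam k i‖ ^ 2)
    -- SPG-ADMM dual update
    (hlamup : ∀ k i, lam (k+1) i
      = lam k i + γ i • (mvec (A i) (x (k+1) i) + mvec (B i) (y (k+1)) - b i))
    -- (x*, y*, λ*) ∈ χ*, a saddle point of the Lagrangian
    (xs : ∀ i, EuclideanSpace ℝ (Fin (n i)))
    (ys : EuclideanSpace ℝ (Fin ny))
    (ls : ∀ i, EuclideanSpace ℝ (Fin (m i)))
    (hsad₁ : ∀ i, xs i ∈ domξ i) (hsad₂ : ys ∈ domg)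
    (hsad₃ : ∀ (x' : ∀ i, EuclideanSpace ℝ (Fin (n i))) (y' : EuclideanSpace ℝ (Fin ny)),
      (∀ i, x' i ∈ domξ i) → y' ∈ domg →
      g ys + ∑ i, (ξ i (xs i) + f i (xs i))
        + ∑ i, ⟪ls i, mvec (A i) (xs i) + mvec (B i) ys - b i⟫
      ≤ g y' + ∑ i, (ξ i (x' i) + f i (x' i))
        + ∑ i, ⟪ls i, mvec (A i) (x' i) + mvec (B i) y' - b i⟫)
    (hsad₄ : ∀ l : ∀ i, EuclideanSpace ℝ (Fin (m i)),
      g ys + ∑ i, (ξ i (xs i) + f i (xs i))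
        + ∑ i, ⟪l i, mvec (A i) (xs i) + mvec (B i) ys - b i⟫
      ≤ g ys + ∑ i, (ξ i (xs i) + f i (xs i))
        + ∑ i, ⟪ls i, mvec (A i) (xs i) + mvec (B i) ys - b i⟫) :
    -- conclusion: for every k ≥ 0 and every λ, inequality (8) of Lemma 1 holds
    ∀ (k : ℕ) (l : ∀ i, EuclideanSpace ℝ (Fin (m i))),
      (1/2 : ℝ) * ∑ i,
        (qnorm ((c k i)⁻¹ • (1 - (γ i * c k i) • ((A i)ᵀ * A i))
            - (L i + (if δ k i = 0 then (0:ℝ) else 1 + Real.sqrt k)) • 1)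
            (x (k+1) i - x k i)
          + γ i * ‖mvec (B i) (y (k+1) - y k)‖ ^ 2
          + (γ i)⁻¹ * ‖lam (k+1) i - lam k i‖ ^ 2)
      ≤ (g ys + ∑ i, (ξ i (xs i) + f i (xs i)))
          - (g (y (k+1)) + ∑ i, (ξ i (x (k+1) i) + f i (x (k+1) i)))
        + ∑ i, ⟪l i, b i - mvec (A i) (x (k+1) i) - mvec (B i) (y (k+1))⟫
        + (1/2 : ℝ) * ∑ i,
          ((c k i)⁻¹ * qnorm (1 - (γ i * c k i) • ((A i)ᵀ * A i)) (xs i - x k i)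
            - (c k i)⁻¹ * qnorm (1 - (γ i * c k i) • ((A i)ᵀ * A i)) (xs i - x (k+1) i)
            + γ i * ‖mvec (B i) (y k - ys)‖ ^ 2
            - γ i * ‖mvec (B i) (y (k+1) - ys)‖ ^ 2
            + (γ i)⁻¹ * ‖l i - lam k i‖ ^ 2
            - (γ i)⁻¹ * ‖l i - lam (k+1) i‖ ^ 2
            + 2 * ⟪xs i - x k i, δ k i⟫
            + ‖δ k i‖ ^ 2 / (1 + Real.sqrt k)) :=
  spg_admm_one_step_inequality_general A B b ξ domξ f f' L g domg γ c x y lam δ hξconv hfconv hfgrad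
    hfLip hgconv hγ hcpos hinit hxup hyup hlamup xs ys ls hsad₁ hsad₂ hsad₄
end

section
/- Let G = {g(1),…,g(K)} be a partition of {1,…,n}, β₁, β₂ > 0, and define ξ(x) = β₁‖x‖₁ + β₂ Σ_{k=1}^K ‖x_{g(k)}‖₂ for x ∈ ℝ^n. Then for every t > 0 and x̄ ∈ ℝ^n, the proximal point x^p = prox_{tξ}(x̄) := argmin_y { ξ(y) + (1/(2t))‖y − x̄‖² } is given blockwise by x^p_{g(k)} = η'_{g(k)} · max{ 1 − tβ₂/‖η'_{g(k)}‖₂, 0 } for k = 1,…,K (interpreting the block as 0 when η'_{g(k)} = 0), where η' ∈ ℝ^n is the componentwise soft-threshold η'_j = sign(x̄_j) · max{ |x̄_j| − tβ₁, 0 }. -/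
/-!
Write `F z = ξ z + ‖z - x̄‖² / (2t)`. If `(x̄ - x^p) / t` is a subgradient of `ξ` at `x^p`, the
expansion of the quadratic around `x^p` gives `F z ≥ F x^p + ‖z - x^p‖² / (2t)`, hence minimality
and uniqueness. The subgradient comes from splitting `x̄ - x^p = (x̄ - η') + (η' - x^p)`.
Coordinatewise, `|x̄_j - η'_j| ≤ tβ₁` with `(x̄_j - η'_j) η'_j = tβ₁ |η'_j|`, and since group
shrinkage rescales `η'_j` by a nonnegative factor this persists at `x^p_j`: `x̄ - η'` is `tβ₁` times
a subgradient of `‖·‖₁` at `x^p`. On each block, `‖η'_g - x^p_g‖₂ ≤ tβ₂` with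
`⟪η'_g - x^p_g, x^p_g⟫ = tβ₂ ‖x^p_g‖₂`, so `η' - x^p` is `tβ₂` times a subgradient of the group
norm. The soft threshold is the group shrinkage of one-dimensional blocks, so both facts reduce to
the same property of the shrinkage factor.
-/

open Finset

open scoped RealInnerProductSpace

section Prox

variable {E : Type*} [NormedAddCommGroup E] [InnerProductSpace ℝ E]

theorem add_sq_norm_sub_le_of_subgradient {f : E → ℝ} {x b : E} {t : ℝ}
    (hf : ∀ z, f x + t⁻¹ * ⟪b - x, z - x⟫ ≤ f z) (z : E) :
    f x + (2 * t)⁻¹ * ‖x - b‖ ^ 2 + (2 * t)⁻¹ * ‖z - x‖ ^ 2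
      ≤ f z + (2 * t)⁻¹ * ‖z - b‖ ^ 2 := by
  have hsplit : ‖z - b‖ ^ 2 = ‖z - x‖ ^ 2 - 2 * ⟪b - x, z - x⟫ + ‖x - b‖ ^ 2 := by
    rw [← sub_add_sub_cancel z x b, norm_add_sq_real, real_inner_comm, ← neg_sub x b,
      inner_neg_left]
    ring
  have hscaled : (2 * t)⁻¹ * ‖z - b‖ ^ 2
      = (2 * t)⁻¹ * ‖z - x‖ ^ 2 - t⁻¹ * ⟪b - x, z - x⟫ + (2 * t)⁻¹ * ‖x - b‖ ^ 2 := by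
    rw [hsplit]; ring
  linarith [hf z]

theorem isUniqueMin_of_subgradient {f : E → ℝ} {x b : E} {t : ℝ} (ht : 0 < t)
    (hf : ∀ z, f x + t⁻¹ * ⟪b - x, z - x⟫ ≤ f z) :
    (∀ z, f x + (2 * t)⁻¹ * ‖x - b‖ ^ 2 ≤ f z + (2 * t)⁻¹ * ‖z - b‖ ^ 2) ∧
      ∀ q, (∀ z, f q + (2 * t)⁻¹ * ‖q - b‖ ^ 2 ≤ f z + (2 * t)⁻¹ * ‖z - b‖ ^ 2) → q = x := by
  have hgap := add_sq_norm_sub_le_of_subgradient hf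
  have h2t : 0 < (2 * t)⁻¹ := by positivity
  refine ⟨fun z => by nlinarith [hgap z, sq_nonneg ‖z - x‖], fun q hq => ?_⟩
  have hdist : ‖q - x‖ ^ 2 ≤ 0 := by nlinarith [hgap q, hq x]
  rw [← sub_eq_zero, ← norm_eq_zero]
  nlinarith [norm_nonneg (q - x)]

end Prox

/-- At `N = 0` the junk value `τ / 0 = 0` gives factor `1`, which is harmless: the block is zero. -/
noncomputable def shrinkFactor (τ N : ℝ) : ℝ := max (1 - τ / N) 0

noncomputable def softThreshold (τ a : ℝ) : ℝ := Real.sign a * max (|a| - τ) 0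

section Shrink

variable {τ N : ℝ}

lemma one_sub_shrinkFactor_mul_of_lt (hτ : 0 ≤ τ) (hlt : τ < N) :
    (1 - shrinkFactor τ N) * N = τ := by
  have hN : 0 < N := hτ.trans_lt hlt
  rw [shrinkFactor, max_eq_left (by rw [sub_nonneg, div_le_one hN]; exact hlt.le)]
  field_simp
  ring

lemma shrinkFactor_nonneg : 0 ≤ shrinkFactor τ N := le_max_right _ _

lemma shrinkFactor_le_one (hτ : 0 ≤ τ) (hN : 0 ≤ N) : shrinkFactor τ N ≤ 1 :=
  max_le (sub_le_self _ (div_nonneg hτ hN)) zero_le_one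

lemma one_sub_shrinkFactor_mul_le (hτ : 0 ≤ τ) (hN : 0 ≤ N) :
    (1 - shrinkFactor τ N) * N ≤ τ := by
  rcases le_or_gt N τ with hle | hlt
  · nlinarith [shrinkFactor_nonneg (τ := τ) (N := N)]
  · exact (one_sub_shrinkFactor_mul_of_lt hτ hlt).le

/-- Either the block is shrunk to zero or it is moved by exactly `τ` towards the origin. -/
lemma one_sub_shrinkFactor_mul_mul_eq (hτ : 0 ≤ τ) (hN : 0 ≤ N) :
    (1 - shrinkFactor τ N) * N * (shrinkFactor τ N * N) = τ * (shrinkFactor τ N * N) := by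
  rcases le_or_gt N τ with hle | hlt
  · suffices shrinkFactor τ N * N = 0 by rw [this, mul_zero, mul_zero]
    rcases hN.eq_or_lt with rfl | hN'
    · exact mul_zero _
    · rw [shrinkFactor, max_eq_right (by rw [sub_nonpos, one_le_div hN']; exact hle), zero_mul]
  · rw [one_sub_shrinkFactor_mul_of_lt hτ hlt]

end Shrink

lemma Real.sign_mul_abs (a : ℝ) : Real.sign a * |a| = a := by
  rcases lt_trichotomy a 0 with ha | rfl | ha
  · rw [Real.sign_of_neg ha, abs_of_neg ha, neg_one_mul, neg_neg]
  · rw [abs_zero, mul_zero]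
  · rw [Real.sign_of_pos ha, abs_of_pos ha, one_mul]

lemma softThreshold_eq_mul_shrinkFactor (τ a : ℝ) :
    softThreshold τ a = a * shrinkFactor τ |a| := by
  rcases eq_or_ne a 0 with rfl | ha
  · simp [softThreshold]
  · have hmax : max (|a| - τ) 0 = |a| * shrinkFactor τ |a| := by
      rw [shrinkFactor, mul_max_of_nonneg _ _ (abs_nonneg a), mul_zero, mul_sub, mul_one,
        mul_div_cancel₀ _ (abs_ne_zero.mpr ha)]
    rw [softThreshold, hmax, ← mul_assoc, Real.sign_mul_abs]

section Subgradient

variable {ι : Type*} {τ : ℝ}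

lemma mul_sub_le_of_abs_le {r x : ℝ} (hr : |r| ≤ τ) (hx : r * x = τ * |x|) (w : ℝ) :
    r * (w - x) ≤ τ * (|w| - |x|) := by
  have : r * w ≤ τ * |w| :=
    (le_abs_self _).trans ((abs_mul r w).trans_le (mul_le_mul_of_nonneg_right hr (abs_nonneg w)))
  rw [mul_sub, mul_sub, hx]
  linarith

lemma sum_mul_sub_le_of_sqrt_le {s : Finset ι} {g x : ι → ℝ}
    (hg : √(∑ l ∈ s, g l ^ 2) ≤ τ) (hx : ∑ l ∈ s, g l * x l = τ * √(∑ l ∈ s, x l ^ 2))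
    (w : ι → ℝ) :
    ∑ l ∈ s, g l * (w l - x l) ≤ τ * (√(∑ l ∈ s, w l ^ 2) - √(∑ l ∈ s, x l ^ 2)) := by
  have : ∑ l ∈ s, g l * w l ≤ τ * √(∑ l ∈ s, w l ^ 2) :=
    (Real.sum_mul_le_sqrt_mul_sqrt s g w).trans (mul_le_mul_of_nonneg_right hg (Real.sqrt_nonneg _))
  simp only [mul_sub, sum_sub_distrib, hx]
  linarith

lemma softThreshold_subgradient (hτ : 0 ≤ τ) {a x d : ℝ} (hd : 0 ≤ d)
    (hx : x = softThreshold τ a * d) (w : ℝ) :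
    (a - softThreshold τ a) * (w - x) ≤ τ * (|w| - |x|) := by
  have hc0 := shrinkFactor_nonneg (τ := τ) (N := |a|)
  have hc1 := shrinkFactor_le_one hτ (abs_nonneg a)
  rw [hx, softThreshold_eq_mul_shrinkFactor]
  apply mul_sub_le_of_abs_le
  · rw [← mul_one_sub, abs_mul, abs_of_nonneg (sub_nonneg.mpr hc1), mul_comm]
    exact one_sub_shrinkFactor_mul_le hτ (abs_nonneg a)
  · rw [abs_mul, abs_mul, abs_of_nonneg hc0, abs_of_nonneg hd]
    have := one_sub_shrinkFactor_mul_mul_eq hτ (abs_nonneg a)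
    have hsq : a * a = |a| * |a| := (abs_mul_abs_self a).symm
    linear_combination d * this + (1 - shrinkFactor τ |a|) * shrinkFactor τ |a| * d * hsq

lemma sqrt_sum_mul_sq (s : Finset ι) (y : ι → ℝ) (c : ℝ) :
    √(∑ l ∈ s, (y l * c) ^ 2) = |c| * √(∑ l ∈ s, y l ^ 2) := by
  simp_rw [mul_pow, ← sum_mul, mul_comm _ (c ^ 2)]
  rw [Real.sqrt_mul (sq_nonneg c), Real.sqrt_sq_eq_abs]

lemma groupShrink_subgradient (hτ : 0 ≤ τ) {s : Finset ι} {y x : ι → ℝ}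
    (hx : ∀ l ∈ s, x l = y l * shrinkFactor τ √(∑ l ∈ s, y l ^ 2)) (w : ι → ℝ) :
    ∑ l ∈ s, (y l - x l) * (w l - x l) ≤ τ * (√(∑ l ∈ s, w l ^ 2) - √(∑ l ∈ s, x l ^ 2)) := by
  set N := √(∑ l ∈ s, y l ^ 2)
  set c := shrinkFactor τ N
  have hc0 : 0 ≤ c := shrinkFactor_nonneg
  have hc1 : c ≤ 1 := shrinkFactor_le_one hτ (Real.sqrt_nonneg _)
  have hN2 : ∑ l ∈ s, y l ^ 2 = N * N :=
    (Real.mul_self_sqrt (sum_nonneg fun l _ => sq_nonneg _)).symm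
  have hxN : √(∑ l ∈ s, x l ^ 2) = c * N := by
    rw [sum_congr rfl fun l hl => by rw [hx l hl], sqrt_sum_mul_sq, abs_of_nonneg hc0]
  apply sum_mul_sub_le_of_sqrt_le
  · rw [sum_congr rfl fun l hl => by rw [hx l hl, ← mul_one_sub], sqrt_sum_mul_sq,
      abs_of_nonneg (sub_nonneg.mpr hc1)]
    exact one_sub_shrinkFactor_mul_le hτ (Real.sqrt_nonneg _)
  · calc ∑ l ∈ s, (y l - x l) * x l = (1 - c) * c * ∑ l ∈ s, y l ^ 2 := by
          rw [mul_sum]; exact sum_congr rfl fun l hl => by rw [hx l hl]; ring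
      _ = (1 - c) * N * (c * N) := by rw [hN2]; ring
      _ = τ * √(∑ l ∈ s, x l ^ 2) := by
          rw [hxN, one_sub_shrinkFactor_mul_mul_eq hτ (Real.sqrt_nonneg _)]

end Subgradient

lemma sum_sum_of_partition {ι κ M : Type*} [Fintype ι] [Fintype κ] [AddCommMonoid M]
    {g : κ → Finset ι} (hcover : ∀ j, ∃ k, j ∈ g k)
    (hdisj : ∀ k k', k ≠ k' → Disjoint (g k) (g k')) (f : ι → M) :
    ∑ k, ∑ l ∈ g k, f l = ∑ j, f j := by
  classical
  rw [← sum_biUnion fun k _ k' _ h => hdisj k k' h]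
  congr
  ext j
  simpa using hcover j

/-- Lemma `lem:prox`: closed-form proximal map of
`ξ(x) = β₁‖x‖₁ + β₂ Σ_k ‖x_{g(k)}‖₂` for a partition `{g(k)}` of the coordinates.
The point `x^p` defined blockwise by group-soft-thresholding the componentwise
soft-threshold `η'` of `x̄` is the (unique) minimizer of
`z ↦ ξ(z) + (1/(2t))‖z − x̄‖²`. -/
theorem prox_l1_plus_group_norm
    {n K : ℕ} (gp : Fin K → Finset (Fin n))
    (hcover : ∀ j : Fin n, ∃ k, j ∈ gp k)
    (hdisj : ∀ k k', k ≠ k' → Disjoint (gp k) (gp k'))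
    (β₁ β₂ t : ℝ) (hβ₁ : 0 < β₁) (hβ₂ : 0 < β₂) (ht : 0 < t)
    (xb η xp : EuclideanSpace ℝ (Fin n))
    -- η' is the componentwise soft-threshold of x̄
    (hη : ∀ j, η j = Real.sign (xb j) * max (|xb j| - t * β₁) 0)
    -- x^p is the blockwise group shrinkage of η'
    (hxp : ∀ k, ∀ j ∈ gp k,
      xp j = η j * max (1 - t * β₂ / Real.sqrt (∑ l ∈ gp k, (η l) ^ 2)) 0) :
    -- x^p minimizes z ↦ ξ(z) + ‖z − x̄‖²/(2t), and is the unique such minimizer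
    (∀ z : EuclideanSpace ℝ (Fin n),
      β₁ * ∑ j, |xp j| + β₂ * ∑ k, Real.sqrt (∑ l ∈ gp k, (xp l) ^ 2)
        + (2 * t)⁻¹ * ‖xp - xb‖ ^ 2
      ≤ β₁ * ∑ j, |z j| + β₂ * ∑ k, Real.sqrt (∑ l ∈ gp k, (z l) ^ 2)
        + (2 * t)⁻¹ * ‖z - xb‖ ^ 2)
    ∧ (∀ q : EuclideanSpace ℝ (Fin n),
      (∀ z : EuclideanSpace ℝ (Fin n),
        β₁ * ∑ j, |q j| + β₂ * ∑ k, Real.sqrt (∑ l ∈ gp k, (q l) ^ 2)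
          + (2 * t)⁻¹ * ‖q - xb‖ ^ 2
        ≤ β₁ * ∑ j, |z j| + β₂ * ∑ k, Real.sqrt (∑ l ∈ gp k, (z l) ^ 2)
          + (2 * t)⁻¹ * ‖z - xb‖ ^ 2) → q = xp) := by
  have hη' : ∀ j, η j = softThreshold (t * β₁) (xb j) := hη
  have hxp' : ∀ k, ∀ j ∈ gp k, xp j = η j * shrinkFactor (t * β₂) √(∑ l ∈ gp k, η l ^ 2) := hxp
  refine isUniqueMin_of_subgradient (f := fun z : EuclideanSpace ℝ (Fin n) =>
    β₁ * ∑ j, |z j| + β₂ * ∑ k, √(∑ l ∈ gp k, z l ^ 2)) ht fun z => ?_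
  have hl1 : ∑ j, (xb j - η j) * (z j - xp j) ≤ t * β₁ * (∑ j, |z j| - ∑ j, |xp j|) := by
    rw [← sum_sub_distrib, mul_sum]
    refine sum_le_sum fun j _ => ?_
    obtain ⟨k, hk⟩ := hcover j
    rw [hη' j]
    exact softThreshold_subgradient (by positivity) shrinkFactor_nonneg
      (by rw [hxp' k j hk, hη' j]) _
  have hgroup : ∑ j, (η j - xp j) * (z j - xp j)
      ≤ t * β₂ * (∑ k, √(∑ l ∈ gp k, z l ^ 2) - ∑ k, √(∑ l ∈ gp k, xp l ^ 2)) := by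
    rw [← sum_sum_of_partition hcover hdisj, ← sum_sub_distrib, mul_sum]
    exact sum_le_sum fun k _ => groupShrink_subgradient (by positivity) (hxp' k) _
  have hinner : ⟪xb - xp, z - xp⟫
      = ∑ j, (xb j - η j) * (z j - xp j) + ∑ j, (η j - xp j) * (z j - xp j) := by
    simp only [PiLp.inner_apply, PiLp.sub_apply, RCLike.inner_apply, conj_trivial,
      ← sum_add_distrib]
    exact sum_congr rfl fun j _ => by ring
  beta_reduce
  rw [hinner, ← le_sub_iff_add_le', inv_mul_le_iff₀ ht]
  linarith
end

section
/- Let ξ : ℝ^{n_x} → ℝ ∪ {+∞} be proper, closed and convex, f : ℝ^{n_x} → ℝ convex and differentiable with L-Lipschitz gradient, g : ℝ^{n_y} → ℝ ∪ {+∞} proper, closed and convex, A ∈ ℝ^{n_y×n_x}, and c, γ > 0. Consider the PG-ADMM iterations for min_{x,y} { ξ(x) + f(x) + g(y) : Ax − y = 0 }: x^{k+1} = prox_{cξ}( x^k − c[∇f(x^k) + Aᵀ(λ^k + γ(Ax^k − y^k))] ), y^{k+1} = argmin_y { g(y) + (γ/2)‖Ax^{k+1} − y + λ^k/γ‖² },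 λ^{k+1} = λ^k + γ(Ax^{k+1} − y^{k+1}). Then for every k: (i) y^{k+1} = Ax^{k+1} + λ^k/γ − (1/γ) prox_{γg*}(λ^k + γAx^{k+1}) and λ^{k+1} = prox_{γg*}(λ^k + γAx^{k+1}), where g* is the Fenchel conjugate of g; and (ii) for k ≥ 1, the x-update can be written as x^{k+1} = prox_{cξ}( x^k − c[∇f(x^k) + Aᵀ(2λ^k − λ^{k−1})] ), so PG-ADMM on this problem coincides with the primal–dual iteration x^{k+1} = prox_{cξ}(x^k − c[∇f(x^k) + Aᵀ(2λ^k − λ^{k−1})]), λ^{k+1} = prox_{γg*}(λ^k + γAx^{k+1}). -/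
/-!
The `y`-update is the proximal step of `g / γ` at `a = A x^{k+1} + λ^k / γ`, so its optimality
condition says that `λ^{k+1} = γ (a - y^{k+1})` is a subgradient of `g` at `y^{k+1}`. By
Fenchel–Young, any `l ∈ ∂g(y)` is the proximal point of `γ g*` at `l + γ y`
(Moreau decomposition), and here `λ^{k+1} + γ y^{k+1} = λ^k + γ A x^{k+1}`. Part (ii) is the
dual update at step `k - 1`, read as `λ^k + γ (A x^k - y^k) = 2 λ^k - λ^{k-1}`.
-/

open Finset Matrix
open scoped RealInnerProductSpace

open Filter Topology

lemma le_of_forall_mem_Ioc_le_add_mul {a b C : ℝ} (h : ∀ t ∈ Set.Ioc (0 : ℝ) 1, a ≤ b + t * C) :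
    a ≤ b := by
  have hlim : Tendsto (fun t : ℝ => b + t * C) (𝓝[>] 0) (𝓝 b) := by
    simpa using (tendsto_const_nhds.add (tendsto_id.mul_const C)).mono_left
      (nhdsWithin_le_nhds (a := (0 : ℝ)))
  refine ge_of_tendsto hlim ?_
  filter_upwards [Ioo_mem_nhdsGT (zero_lt_one' ℝ)] with t ht
  exact h t (Set.Ioo_subset_Ioc_self ht)

section ConvexAnalysis

variable {E : Type*} [NormedAddCommGroup E] [InnerProductSpace ℝ E]

/-- The conjugate of `g` extended by `+∞` off `s`, as a real number on its effective domain
`fenchelConjDom g s`. -/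
noncomputable def fenchelConj (g : E → ℝ) (s : Set E) (l : E) : ℝ :=
  sSup ((fun w => ⟪l, w⟫ - g w) '' s)

def fenchelConjDom (g : E → ℝ) (s : Set E) : Set E :=
  {l | BddAbove ((fun w => ⟪l, w⟫ - g w) '' s)}

/-- `p = prox_{c h}(v)` for `h` extended by `+∞` off `s`. -/
def IsProx (h : E → ℝ) (s : Set E) (c : ℝ) (v p : E) : Prop :=
  p ∈ s ∧ ∀ z ∈ s, h p + (2 * c)⁻¹ * ‖p - v‖ ^ 2 ≤ h z + (2 * c)⁻¹ * ‖z - v‖ ^ 2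

/-- The optimality condition of `y = prox_{g/γ}(a)`: `γ (a - y) ∈ ∂g(y)`. -/
lemma ConvexOn.isMaxOn_inner_sub_of_isMinOn_add_sq {s : Set E} {g : E → ℝ} {γ : ℝ} {a y : E}
    (hg : ConvexOn ℝ s g) (hy : y ∈ s)
    (hmin : ∀ z ∈ s, g y + γ / 2 * ‖a - y‖ ^ 2 ≤ g z + γ / 2 * ‖a - z‖ ^ 2) :
    IsMaxOn (fun w => ⟪γ • (a - y), w⟫ - g w) s y := by
  intro z hz
  suffices ⟪γ • (a - y), z - y⟫ ≤ g z - g y by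
    simp only [Set.mem_ofPred_eq, inner_sub_right] at this ⊢
    linarith
  -- test minimality against `(1 - t) y + t z` and let `t → 0⁺`
  refine le_of_forall_mem_Ioc_le_add_mul (C := γ / 2 * ‖z - y‖ ^ 2) fun t ⟨ht0, ht1⟩ => ?_
  have hzt := hmin ((1 - t) • y + t • z) (hg.1 hy hz (by linarith) ht0.le (by ring))
  have hconv := hg.2 hy hz (by linarith : (0 : ℝ) ≤ 1 - t) ht0.le (by ring)
  have hsq : ‖a - ((1 - t) • y + t • z)‖ ^ 2
      = ‖a - y‖ ^ 2 - 2 * (t * ⟪a - y, z - y⟫) + t ^ 2 * ‖z - y‖ ^ 2 := by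
    rw [show a - ((1 - t) • y + t • z) = (a - y) - t • (z - y) by module, norm_sub_sq_real,
      real_inner_smul_right, norm_smul, Real.norm_eq_abs, abs_of_pos ht0, mul_pow]
  rw [hsq] at hzt
  simp only [smul_eq_mul] at hconv
  rw [real_inner_smul_left]
  have : t * (γ * ⟪a - y, z - y⟫) ≤ t * (g z - g y + t * (γ / 2 * ‖z - y‖ ^ 2)) := by
    nlinarith
  exact le_of_mul_le_mul_left this ht0

lemma IsMaxOn.fenchelConj_eq {g : E → ℝ} {s : Set E} {l y : E} (hy : y ∈ s)
    (hmax : IsMaxOn (fun w => ⟪l, w⟫ - g w) s y) :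
    fenchelConj g s l = ⟪l, y⟫ - g y :=
  (hmax.isLUB hy).csSup_eq ⟨_, y, hy, rfl⟩

lemma inner_sub_le_fenchelConj {g : E → ℝ} {s : Set E} {l y : E} (hl : l ∈ fenchelConjDom g s)
    (hy : y ∈ s) : ⟪l, y⟫ - g y ≤ fenchelConj g s l :=
  le_csSup hl ⟨y, hy, rfl⟩

/-- Moreau decomposition: if `l ∈ ∂g(y)` then `l = prox_{γ g*}(l + γ y)`. -/
lemma IsMaxOn.isProx_fenchelConj {g : E → ℝ} {s : Set E} {γ : ℝ} {l y : E} (hγ : 0 < γ)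
    (hy : y ∈ s) (hmax : IsMaxOn (fun w => ⟪l, w⟫ - g w) s y) :
    IsProx (fenchelConj g s) (fenchelConjDom g s) γ (l + γ • y) l := by
  refine ⟨hmax.bddAbove, fun m hm => ?_⟩
  have hfenchelYoung := inner_sub_le_fenchelConj hm hy
  have hsq : ‖m - (l + γ • y)‖ ^ 2 = ‖m - l‖ ^ 2 - 2 * γ * ⟪m - l, y⟫ + γ ^ 2 * ‖y‖ ^ 2 := by
    rw [show m - (l + γ • y) = (m - l) - γ • y by abel, norm_sub_sq_real,
      real_inner_smul_right, norm_smul, Real.norm_eq_abs, abs_of_pos hγ, mul_pow]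
    ring
  rw [hmax.fenchelConj_eq hy, hsq, show l - (l + γ • y) = -(γ • y) by abel, norm_neg, norm_smul,
    Real.norm_eq_abs, abs_of_pos hγ, inner_sub_left]
  field_simp
  nlinarith [sq_nonneg ‖m - l‖]

end ConvexAnalysis

theorem pg_admm_is_primal_dual_general
    {nx ny : ℕ}
    (A : Matrix (Fin ny) (Fin nx) ℝ)
    (ξ : EuclideanSpace ℝ (Fin nx) → ℝ) (domξ : Set (EuclideanSpace ℝ (Fin nx)))
    (f' : EuclideanSpace ℝ (Fin nx) → EuclideanSpace ℝ (Fin nx))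
    (g : EuclideanSpace ℝ (Fin ny) → ℝ) (domg : Set (EuclideanSpace ℝ (Fin ny)))
    (c γ : ℝ)
    (x : ℕ → EuclideanSpace ℝ (Fin nx))
    (y : ℕ → EuclideanSpace ℝ (Fin ny))
    (lam : ℕ → EuclideanSpace ℝ (Fin ny))
    -- g proper closed convex
    (hgconv : ConvexOn ℝ domg g)
    -- positive parameters
    (hγpos : 0 < γ)
    -- PG-ADMM x-update
    (hxup : ∀ k, x (k+1) ∈ domξ ∧ ∀ z ∈ domξ,
      ξ (x (k+1)) + (2 * c)⁻¹ *
        ‖x (k+1) - (x k - c • (f' (x k) + mvec Aᵀ (lam k + γ • (mvec A (x k) - y k))))‖ ^ 2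
      ≤ ξ z + (2 * c)⁻¹ *
        ‖z - (x k - c • (f' (x k) + mvec Aᵀ (lam k + γ • (mvec A (x k) - y k))))‖ ^ 2)
    -- PG-ADMM y-update
    (hyup : ∀ k, y (k+1) ∈ domg ∧ ∀ z ∈ domg,
      g (y (k+1)) + γ / 2 * ‖mvec A (x (k+1)) - y (k+1) + γ⁻¹ • lam k‖ ^ 2
      ≤ g z + γ / 2 * ‖mvec A (x (k+1)) - z + γ⁻¹ • lam k‖ ^ 2)
    -- PG-ADMM dual update
    (hlamup : ∀ k, lam (k+1) = lam k + γ • (mvec A (x (k+1)) - y (k+1))) :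
    -- (i) the y- and λ-updates are a Moreau decomposition through prox_{γ g*}
    (∀ k,
      (lam (k+1) ∈ {l | BddAbove ((fun w => ⟪l, w⟫ - g w) '' domg)} ∧
        ∀ z ∈ {l | BddAbove ((fun w => ⟪l, w⟫ - g w) '' domg)},
          sSup ((fun w => ⟪lam (k+1), w⟫ - g w) '' domg)
            + (2 * γ)⁻¹ * ‖lam (k+1) - (lam k + γ • mvec A (x (k+1)))‖ ^ 2
          ≤ sSup ((fun w => ⟪z, w⟫ - g w) '' domg)
            + (2 * γ)⁻¹ * ‖z - (lam k + γ • mvec A (x (k+1)))‖ ^ 2)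
      ∧ y (k+1) = mvec A (x (k+1)) + γ⁻¹ • lam k - γ⁻¹ • lam (k+1))
    ∧
    -- (ii) for k ≥ 1 the x-update can be written in primal–dual form
    (∀ k : ℕ, 1 ≤ k →
      ∀ z ∈ domξ,
        ξ (x (k+1)) + (2 * c)⁻¹ *
          ‖x (k+1) - (x k - c • (f' (x k)
            + mvec Aᵀ ((2:ℝ) • lam k - lam (k-1))))‖ ^ 2
        ≤ ξ z + (2 * c)⁻¹ *
          ‖z - (x k - c • (f' (x k)
            + mvec Aᵀ ((2:ℝ) • lam k - lam (k-1))))‖ ^ 2) := by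
  have hγ : γ ≠ 0 := hγpos.ne'
  refine ⟨fun k => ⟨?_, ?_⟩, fun k hk => ?_⟩
  · obtain ⟨hy, hymin⟩ := hyup k
    simp only [sub_add_eq_add_sub] at hymin
    have hsubgrad := hgconv.isMaxOn_inner_sub_of_isMinOn_add_sq hy hymin
    have hlam : γ • (mvec A (x (k+1)) + γ⁻¹ • lam k - y (k+1)) = lam (k+1) := by
      rw [hlamup k, smul_sub, smul_add, smul_smul, mul_inv_cancel₀ hγ, one_smul]
      module
    have hcenter : lam k + γ • mvec A (x (k+1)) = lam (k+1) + γ • y (k+1) := by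
      rw [hlamup k]
      module
    rw [hlam] at hsubgrad
    rw [hcenter]
    exact hsubgrad.isProx_fenchelConj hγpos hy
  · rw [hlamup k, smul_add, smul_smul, inv_mul_cancel₀ hγ, one_smul]
    module
  · obtain ⟨m, rfl⟩ := Nat.exists_eq_add_of_le' hk
    have hextrapolate : (2 : ℝ) • lam (m+1) - lam (m+1-1)
        = lam (m+1) + γ • (mvec A (x (m+1)) - y (m+1)) := by
      rw [Nat.add_sub_cancel, hlamup m]
      module
    rw [hextrapolate]
    exact (hxup (m+1)).2

/-- Section "Connections to the existing work": PG-ADMM applied to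
`min { ξ(x) + f(x) + g(y) : Ax − y = 0 }` coincides with the Condat–Chambolle–Pock
primal–dual iteration.  Extended-real-valued proper closed convex `ξ` and `g` are
modelled as real-valued convex functions on their (closed, nonempty, convex) effective
domains; the Fenchel conjugate `g*` is modelled by its real value
`g*(λ) = sup_{y ∈ dom g}(⟨λ,y⟩ − g(y))` on its effective domain
`dom g* = {λ | the sup is finite}`, and `prox` is characterized as the minimizer of the
corresponding Moreau envelope objective. -/
theorem pg_admm_is_primal_dual
    {nx ny : ℕ}
    (A : Matrix (Fin ny) (Fin nx) ℝ)
    (ξ : EuclideanSpace ℝ (Fin nx) → ℝ) (domξ : Set (EuclideanSpace ℝ (Fin nx)))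
    (f : EuclideanSpace ℝ (Fin nx) → ℝ)
    (f' : EuclideanSpace ℝ (Fin nx) → EuclideanSpace ℝ (Fin nx))
    (L : ℝ)
    (g : EuclideanSpace ℝ (Fin ny) → ℝ) (domg : Set (EuclideanSpace ℝ (Fin ny)))
    (c γ : ℝ)
    (x : ℕ → EuclideanSpace ℝ (Fin nx))
    (y : ℕ → EuclideanSpace ℝ (Fin ny))
    (lam : ℕ → EuclideanSpace ℝ (Fin ny))
    -- ξ proper closed convex
    (hξconv : ConvexOn ℝ domξ ξ)
    (hξlsc : LowerSemicontinuousOn ξ domξ)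
    (hξcl : IsClosed domξ) (hξne : domξ.Nonempty)
    -- f convex with L-Lipschitz gradient
    (hfconv : ConvexOn ℝ Set.univ f)
    (hfgrad : ∀ z, HasGradientAt f (f' z) z)
    (hfLip : ∀ z w, ‖f' z - f' w‖ ≤ L * ‖z - w‖)
    -- g proper closed convex
    (hgconv : ConvexOn ℝ domg g)
    (hglsc : LowerSemicontinuousOn g domg)
    (hgcl : IsClosed domg) (hgne : domg.Nonempty)
    -- positive parameters
    (hcpos : 0 < c) (hγpos : 0 < γ)
    -- PG-ADMM x-update
    (hxup : ∀ k, x (k+1) ∈ domξ ∧ ∀ z ∈ domξ,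
      ξ (x (k+1)) + (2 * c)⁻¹ *
        ‖x (k+1) - (x k - c • (f' (x k) + mvec Aᵀ (lam k + γ • (mvec A (x k) - y k))))‖ ^ 2
      ≤ ξ z + (2 * c)⁻¹ *
        ‖z - (x k - c • (f' (x k) + mvec Aᵀ (lam k + γ • (mvec A (x k) - y k))))‖ ^ 2)
    -- PG-ADMM y-update
    (hyup : ∀ k, y (k+1) ∈ domg ∧ ∀ z ∈ domg,
      g (y (k+1)) + γ / 2 * ‖mvec A (x (k+1)) - y (k+1) + γ⁻¹ • lam k‖ ^ 2
      ≤ g z + γ / 2 * ‖mvec A (x (k+1)) - z + γ⁻¹ • lam k‖ ^ 2)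
    -- PG-ADMM dual update
    (hlamup : ∀ k, lam (k+1) = lam k + γ • (mvec A (x (k+1)) - y (k+1))) :
    -- (i) the y- and λ-updates are a Moreau decomposition through prox_{γ g*}
    (∀ k,
      (lam (k+1) ∈ {l | BddAbove ((fun w => ⟪l, w⟫ - g w) '' domg)} ∧
        ∀ z ∈ {l | BddAbove ((fun w => ⟪l, w⟫ - g w) '' domg)},
          sSup ((fun w => ⟪lam (k+1), w⟫ - g w) '' domg)
            + (2 * γ)⁻¹ * ‖lam (k+1) - (lam k + γ • mvec A (x (k+1)))‖ ^ 2
          ≤ sSup ((fun w => ⟪z, w⟫ - g w) '' domg)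
            + (2 * γ)⁻¹ * ‖z - (lam k + γ • mvec A (x (k+1)))‖ ^ 2)
      ∧ y (k+1) = mvec A (x (k+1)) + γ⁻¹ • lam k - γ⁻¹ • lam (k+1))
    ∧
    -- (ii) for k ≥ 1 the x-update can be written in primal–dual form
    (∀ k : ℕ, 1 ≤ k →
      ∀ z ∈ domξ,
        ξ (x (k+1)) + (2 * c)⁻¹ *
          ‖x (k+1) - (x k - c • (f' (x k)
            + mvec Aᵀ ((2:ℝ) • lam k - lam (k-1))))‖ ^ 2
        ≤ ξ z + (2 * c)⁻¹ *
          ‖z - (x k - c • (f' (x k)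
            + mvec Aᵀ ((2:ℝ) • lam k - lam (k-1))))‖ ^ 2) :=
  pg_admm_is_primal_dual_general A ξ domξ f' g domg c γ x y lam hgconv hγpos hxup hyup hlamup
end

section
/- Consider PG-ADMM applied to the edge-based consensus formulation: minimize Σ_{i∈N} Φ_i(x_i) subject to x_i − y_{ij} = 0 (multiplier α_{ij}) and x_j − y_{ij} = 0 (multiplier β_{ij}) for each (i,j) ∈ E, with penalties γ_i > 0 and updates: x-proximal-gradient steps; y_{ij}^{k+1} = argmin_{y_{ij}} { −⟨α_{ij}^k + β_{ij}^k, y_{ij}⟩ + (γ_i/2)‖x_i^{k+1} − y_{ij}‖² + (γ_j/2)‖x_j^{k+1} − y_{ij}‖² }; α_{ij}^{k+1} = α_{ij}^k + γ_i(x_i^{k+1} − y_{ij}^{k+1}); β_{ij}^{k+1} = β_{ij}^k + γ_j(x_j^{k+1} − y_{ij}^{k+1}). Suppose the initialization is α_{ij}⁰ = β_{ij}⁰ = 0 and y_{ij}⁰ = (γ_i x_i⁰ + γ_j x_j⁰)/(γ_i + γ_j) for all (i,j) ∈ E. Then for every (i,j) ∈ E: (i) y_{ij}^{k+1} = (α_{ij}^k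 + β_{ij}^k + γ_i x_i^{k+1} + γ_j x_j^{k+1})/(γ_i + γ_j) for all k ≥ 0; (ii) α_{ij}^k + β_{ij}^k = 0 for all k ≥ 1; (iii) y_{ij}^k = (γ_i x_i^k + γ_j x_j^k)/(γ_i + γ_j) for all k ≥ 0; (iv) α_{ij}^k = (γ_iγ_j/(γ_i+γ_j)) Σ_{ℓ=1}^k (x_i^ℓ − x_j^ℓ) and β_{ij}^k = −α_{ij}^k for all k ≥ 1; and consequently (v) the x-gradient of the augmented Lagrangian satisfies ∇_{x_i}φ_γ(x^k, y^k, α^k, β^k) = ∇f_i(x_i^k) + Σ_{j∈N_i} (γ_iγ_j/(γ_i+γ_j)) [ (x_i^k − x_j^k) + Σ_{ℓ=1}^k (x_i^ℓ − x_j^ℓ) ] for all k ≥ 0. -/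
/-!
The `y`-subproblem of an edge is a strongly convex quadratic, and completing the square gives
its unique minimiser, which is (i). Adding the two dual updates gives
`α^{k+1} + β^{k+1} = α^k + β^k + γ_i x_i^{k+1} + γ_j x_j^{k+1} - (γ_i + γ_j) y^{k+1} = 0`,
so from then on `y` is the `γ`-weighted average of its endpoints,
`x_i - y_{ij} = γ_j / (γ_i + γ_j) • (x_i - x_j)`, and the `α`-update telescopes. Each term of the
gradient in (v) is then the contribution of one edge; the terms with `j < i` are the same
computation with the two endpoints of the edge exchanged.
-/

open Finset
open scoped RealInnerProductSpace

lemma sub_smul_weightedAverage {E : Type*} [AddCommGroup E] [Module ℝ E] {a b : ℝ}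
    (hab : a + b ≠ 0) (u v : E) :
    u - (a + b)⁻¹ • (a • u + b • v) = (b / (a + b)) • (u - v) := by
  match_scalars
  · field_simp; ring
  · field_simp

lemma Finset.sum_filter_gt_add_sum_filter_lt {ι M : Type*} [LinearOrder ι] [AddCommMonoid M]
    {s : Finset ι} {i : ι} (hi : i ∉ s) (g : ι → M) :
    ∑ j ∈ s with i < j, g j + ∑ j ∈ s with j < i, g j = ∑ j ∈ s, g j := by
  rw [← sum_filter_add_sum_filter_not s (i < ·)]
  congr 1
  refine sum_congr (filter_congr fun j hj => ?_) fun _ _ => rfl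
  rw [not_lt]
  exact (ne_of_mem_of_not_mem hj hi).le_iff_lt.symm

section

variable {E : Type*} [NormedAddCommGroup E] [InnerProductSpace ℝ E]

noncomputable def edgeSubproblem (a b : ℝ) (c u v z : E) : ℝ :=
  -⟪c, z⟫ + a / 2 * ‖u - z‖ ^ 2 + b / 2 * ‖v - z‖ ^ 2

lemma edgeSubproblem_comm (a b : ℝ) (c u v z : E) :
    edgeSubproblem a b c u v z = edgeSubproblem b a c v u z := by
  unfold edgeSubproblem; ring

lemma edgeSubproblem_sub_edgeSubproblem {a b : ℝ} {c u v m : E}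
    (hm : (a + b) • m = c + a • u + b • v) (z : E) :
    edgeSubproblem a b c u v z - edgeSubproblem a b c u v m = (a + b) / 2 * ‖z - m‖ ^ 2 := by
  have hinner : ∀ w : E, ⟪c, w⟫ + a * ⟪u, w⟫ + b * ⟪v, w⟫ = (a + b) * ⟪m, w⟫ := fun w => by
    simpa only [inner_add_left, real_inner_smul_left] using congrArg (⟪·, w⟫) hm.symm
  simp only [edgeSubproblem, norm_sub_sq_real]
  linear_combination hinner m - hinner z + (a + b) * real_inner_self_eq_norm_sq m
    + (a + b) * real_inner_comm m z

lemma eq_of_isMinimizer_edgeSubproblem {a b : ℝ} (hab : 0 < a + b) {c u v w : E}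
    (hw : ∀ z, edgeSubproblem a b c u v w ≤ edgeSubproblem a b c u v z) :
    w = (a + b)⁻¹ • (c + a • u + b • v) := by
  set m := (a + b)⁻¹ • (c + a • u + b • v)
  have hgap := edgeSubproblem_sub_edgeSubproblem (smul_inv_smul₀ hab.ne' (c + a • u + b • v)) w
  have hsq : ‖w - m‖ ^ 2 ≤ 0 := by nlinarith [hw m]
  simpa [sub_eq_zero] using hsq

/-- The PG-ADMM iterates seen from a single edge `(i, j)`: `a = γ_i`, `b = γ_j`, `u = x_i`,
`v = x_j`, and `y`, `α`, `β` are `y_{ij}`, `α_{ij}`, `β_{ij}`. -/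
structure EdgeIterates (a b : ℝ) (u v y α β : ℕ → E) : Prop where
  α_zero : α 0 = 0
  β_zero : β 0 = 0
  y_zero : y 0 = (a + b)⁻¹ • (a • u 0 + b • v 0)
  y_succ_isMin : ∀ k z, edgeSubproblem a b (α k + β k) (u (k + 1)) (v (k + 1)) (y (k + 1))
    ≤ edgeSubproblem a b (α k + β k) (u (k + 1)) (v (k + 1)) z
  α_succ : ∀ k, α (k + 1) = α k + a • (u (k + 1) - y (k + 1))
  β_succ : ∀ k, β (k + 1) = β k + b • (v (k + 1) - y (k + 1))

namespace EdgeIterates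

variable {a b : ℝ} {u v y α β : ℕ → E} (h : EdgeIterates a b u v y α β)
include h

lemma swap : EdgeIterates b a v u y β α where
  α_zero := h.β_zero
  β_zero := h.α_zero
  y_zero := by rw [h.y_zero, add_comm a, add_comm (a • u 0)]
  y_succ_isMin k z := by
    simpa only [add_comm (α k), edgeSubproblem_comm a b] using h.y_succ_isMin k z
  α_succ := h.β_succ
  β_succ := h.α_succ

variable (hab : 0 < a + b)
include hab

lemma y_succ (k : ℕ) :
    y (k + 1) = (a + b)⁻¹ • (α k + β k + a • u (k + 1) + b • v (k + 1)) :=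
  eq_of_isMinimizer_edgeSubproblem hab (h.y_succ_isMin k)

lemma α_add_β (k : ℕ) : α k + β k = 0 := by
  cases k with
  | zero => rw [h.α_zero, h.β_zero, add_zero]
  | succ k =>
    have hy := congrArg ((a + b) • ·) (h.y_succ hab k)
    simp only [smul_inv_smul₀ hab.ne'] at hy
    rw [h.α_succ, h.β_succ]
    linear_combination (norm := module) -hy

lemma y_eq (k : ℕ) : y k = (a + b)⁻¹ • (a • u k + b • v k) := by
  cases k with
  | zero => exact h.y_zero
  | succ k => rw [h.y_succ hab, h.α_add_β hab, zero_add]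

lemma β_eq_neg_α (k : ℕ) : β k = -α k :=
  eq_neg_of_add_eq_zero_right (h.α_add_β hab k)

lemma α_eq (k : ℕ) : α k = (a * b / (a + b)) • ∑ l ∈ Icc 1 k, (u l - v l) := by
  induction k with
  | zero => simp [h.α_zero]
  | succ k ih =>
    rw [h.α_succ, ih, h.y_eq hab, sub_smul_weightedAverage hab.ne', sum_Icc_succ_top (by omega)]
    match_scalars <;> field_simp

lemma α_add_smul_sub_y (k : ℕ) :
    α k + a • (u k - y k) = (a * b / (a + b)) • ((u k - v k) + ∑ l ∈ Icc 1 k, (u l - v l)) := by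
  rw [h.α_eq hab, h.y_eq hab, sub_smul_weightedAverage hab.ne']
  match_scalars <;> field_simp

end EdgeIterates

end

theorem dpga_edge_based_identities_general
    {n N : ℕ} (G : SimpleGraph (Fin N)) [DecidableRel G.Adj]
    (γ : Fin N → ℝ) (hγ : ∀ i, 0 < γ i)
    (f' : Fin N → EuclideanSpace ℝ (Fin n) → EuclideanSpace ℝ (Fin n))
    -- primal node iterates (produced by the proximal-gradient x-steps)
    (x : ℕ → Fin N → EuclideanSpace ℝ (Fin n))
    -- edge variables and multipliers
    (y α β : ℕ → Fin N → Fin N → EuclideanSpace ℝ (Fin n))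
    -- initialization
    (hα0 : ∀ i j, G.Adj i j → i < j → α 0 i j = 0)
    (hβ0 : ∀ i j, G.Adj i j → i < j → β 0 i j = 0)
    (hy0 : ∀ i j, G.Adj i j → i < j →
      y 0 i j = (γ i + γ j)⁻¹ • (γ i • x 0 i + γ j • x 0 j))
    -- y-update: y_{ij}^{k+1} minimizes the partial augmented Lagrangian
    (hyup : ∀ k i j, G.Adj i j → i < j →
      ∀ z : EuclideanSpace ℝ (Fin n),
        -⟪α k i j + β k i j, y (k+1) i j⟫
          + γ i / 2 * ‖x (k+1) i - y (k+1) i j‖ ^ 2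
          + γ j / 2 * ‖x (k+1) j - y (k+1) i j‖ ^ 2
        ≤ -⟪α k i j + β k i j, z⟫
          + γ i / 2 * ‖x (k+1) i - z‖ ^ 2
          + γ j / 2 * ‖x (k+1) j - z‖ ^ 2)
    -- dual updates
    (hαup : ∀ k i j, G.Adj i j → i < j →
      α (k+1) i j = α k i j + γ i • (x (k+1) i - y (k+1) i j))
    (hβup : ∀ k i j, G.Adj i j → i < j →
      β (k+1) i j = β k i j + γ j • (x (k+1) j - y (k+1) i j)) :
    -- (i) closed form of the y-update
    (∀ k i j, G.Adj i j → i < j →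
      y (k+1) i j = (γ i + γ j)⁻¹
        • (α k i j + β k i j + γ i • x (k+1) i + γ j • x (k+1) j))
    -- (ii) α_{ij}^k + β_{ij}^k = 0 for k ≥ 1
    ∧ (∀ k : ℕ, 1 ≤ k → ∀ i j, G.Adj i j → i < j → α k i j + β k i j = 0)
    -- (iii) y_{ij}^k is the γ-weighted average of x_i^k and x_j^k
    ∧ (∀ k i j, G.Adj i j → i < j →
      y k i j = (γ i + γ j)⁻¹ • (γ i • x k i + γ j • x k j))
    -- (iv) closed forms of the multipliers
    ∧ (∀ k : ℕ, 1 ≤ k → ∀ i j, G.Adj i j → i < j →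
      α k i j = (γ i * γ j / (γ i + γ j)) • ∑ l ∈ Finset.Icc 1 k, (x l i - x l j)
      ∧ β k i j = -α k i j)
    -- (v) the partial gradient of the augmented Lagrangian simplifies
    ∧ (∀ k i,
      f' i (x k i)
        + ∑ j ∈ (G.neighborFinset i).filter (fun j => i < j),
            (α k i j + γ i • (x k i - y k i j))
        + ∑ j ∈ (G.neighborFinset i).filter (fun j => j < i),
            (β k j i + γ i • (x k i - y k j i))
      = f' i (x k i)
        + ∑ j ∈ G.neighborFinset i, (γ i * γ j / (γ i + γ j))
            • ((x k i - x k j) + ∑ l ∈ Finset.Icc 1 k, (x l i - x l j))) := by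
  have hs : ∀ i j, 0 < γ i + γ j := fun i j => add_pos (hγ i) (hγ j)
  have edge : ∀ i j, G.Adj i j → i < j →
      EdgeIterates (γ i) (γ j) (x · i) (x · j) (y · i j) (α · i j) (β · i j) :=
    fun i j hij hlt => ⟨hα0 i j hij hlt, hβ0 i j hij hlt, hy0 i j hij hlt,
      fun k => hyup k i j hij hlt, fun k => hαup k i j hij hlt, fun k => hβup k i j hij hlt⟩
  refine ⟨fun k i j hij hlt => (edge i j hij hlt).y_succ (hs i j) k,
    fun k _ i j hij hlt => (edge i j hij hlt).α_add_β (hs i j) k,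
    fun k i j hij hlt => (edge i j hij hlt).y_eq (hs i j) k,
    fun k _ i j hij hlt => ⟨(edge i j hij hlt).α_eq (hs i j) k,
      (edge i j hij hlt).β_eq_neg_α (hs i j) k⟩, fun k i => ?_⟩
  rw [add_assoc, ← sum_filter_gt_add_sum_filter_lt (G.notMem_neighborFinset_self i)]
  congr 2
  · refine sum_congr rfl fun j hj => ?_
    obtain ⟨hij, hlt⟩ := mem_filter.mp hj
    exact (edge i j ((G.mem_neighborFinset i j).mp hij) hlt).α_add_smul_sub_y (hs i j) k
  · refine sum_congr rfl fun j hj => ?_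
    obtain ⟨hij, hlt⟩ := mem_filter.mp hj
    exact (edge j i ((G.mem_neighborFinset i j).mp hij).symm hlt).swap.α_add_smul_sub_y
      (hs i j) k

/-- derivation of DPGA, Section `sec:dpga2`: closed forms for the
`y`-, `α`-, `β`- iterates of PG-ADMM on the edge-based consensus formulation, and the
resulting simplification of the partial gradient of the augmented Lagrangian.  Edges
are pairs `(i,j)` with `i < j` adjacent in `G`; `∇_{x_i}φ_γ` is given by the formula
from the context. -/
theorem dpga_edge_based_identities
    {n N : ℕ} (G : SimpleGraph (Fin N)) [DecidableRel G.Adj]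
    (hconn : G.Connected)
    (γ : Fin N → ℝ) (hγ : ∀ i, 0 < γ i)
    (f : Fin N → EuclideanSpace ℝ (Fin n) → ℝ)
    (f' : Fin N → EuclideanSpace ℝ (Fin n) → EuclideanSpace ℝ (Fin n))
    (hfgrad : ∀ i z, HasGradientAt (f i) (f' i z) z)
    -- primal node iterates (produced by the proximal-gradient x-steps)
    (x : ℕ → Fin N → EuclideanSpace ℝ (Fin n))
    -- edge variables and multipliers
    (y α β : ℕ → Fin N → Fin N → EuclideanSpace ℝ (Fin n))
    -- initialization
    (hα0 : ∀ i j, G.Adj i j → i < j → α 0 i j = 0)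
    (hβ0 : ∀ i j, G.Adj i j → i < j → β 0 i j = 0)
    (hy0 : ∀ i j, G.Adj i j → i < j →
      y 0 i j = (γ i + γ j)⁻¹ • (γ i • x 0 i + γ j • x 0 j))
    -- y-update: y_{ij}^{k+1} minimizes the partial augmented Lagrangian
    (hyup : ∀ k i j, G.Adj i j → i < j →
      ∀ z : EuclideanSpace ℝ (Fin n),
        -⟪α k i j + β k i j, y (k+1) i j⟫
          + γ i / 2 * ‖x (k+1) i - y (k+1) i j‖ ^ 2
          + γ j / 2 * ‖x (k+1) j - y (k+1) i j‖ ^ 2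
        ≤ -⟪α k i j + β k i j, z⟫
          + γ i / 2 * ‖x (k+1) i - z‖ ^ 2
          + γ j / 2 * ‖x (k+1) j - z‖ ^ 2)
    -- dual updates
    (hαup : ∀ k i j, G.Adj i j → i < j →
      α (k+1) i j = α k i j + γ i • (x (k+1) i - y (k+1) i j))
    (hβup : ∀ k i j, G.Adj i j → i < j →
      β (k+1) i j = β k i j + γ j • (x (k+1) j - y (k+1) i j)) :
    -- (i) closed form of the y-update
    (∀ k i j, G.Adj i j → i < j →
      y (k+1) i j = (γ i + γ j)⁻¹
        • (α k i j + β k i j + γ i • x (k+1) i + γ j • x (k+1) j))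
    -- (ii) α_{ij}^k + β_{ij}^k = 0 for k ≥ 1
    ∧ (∀ k : ℕ, 1 ≤ k → ∀ i j, G.Adj i j → i < j → α k i j + β k i j = 0)
    -- (iii) y_{ij}^k is the γ-weighted average of x_i^k and x_j^k
    ∧ (∀ k i j, G.Adj i j → i < j →
      y k i j = (γ i + γ j)⁻¹ • (γ i • x k i + γ j • x k j))
    -- (iv) closed forms of the multipliers
    ∧ (∀ k : ℕ, 1 ≤ k → ∀ i j, G.Adj i j → i < j →
      α k i j = (γ i * γ j / (γ i + γ j)) • ∑ l ∈ Finset.Icc 1 k, (x l i - x l j)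
      ∧ β k i j = -α k i j)
    -- (v) the partial gradient of the augmented Lagrangian simplifies
    ∧ (∀ k i,
      f' i (x k i)
        + ∑ j ∈ (G.neighborFinset i).filter (fun j => i < j),
            (α k i j + γ i • (x k i - y k i j))
        + ∑ j ∈ (G.neighborFinset i).filter (fun j => j < i),
            (β k j i + γ i • (x k i - y k j i))
      = f' i (x k i)
        + ∑ j ∈ G.neighborFinset i, (γ i * γ j / (γ i + γ j))
            • ((x k i - x k j) + ∑ l ∈ Finset.Icc 1 k, (x l i - x l j))) :=
  dpga_edge_based_identities_general G γ hγ f' x y α β hα0 hβ0 hy0 hyup hαup hβup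
end
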